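/- arXiv:2209.04905 — 6 statements merged into one kernel-verified Lean document; each statement's English description precedes it below -/
import Mathlib

section
/- If λ is an admissible Dyck word with red(λ) = 1, then red((λ ρ*(λ))^j) = 1 for all j ≥ 1; and if red(λ) = ξη with ξ a word in right brackets and η a word in left brackets, then red((λ ρ*(λ))^j) = ξ ρ*(ξ) for all j ≥ 1. -/
/-- The Dyck alphabet on `2m` symbols: `Sum.inl i` is the left bracket `αᵢ`,
`Sum.inr i` is the right bracket `βᵢ`. -/
abbrev Letter (m : ℕ) := Fin m ⊕ Fin m

/-- One step of stack-based reduction in the Dyck monoid with zero.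
The state `some s` records the reduced (normal-form) word, stored reversed
(head of `s` = last letter of the normal form); `none` represents the zero
element of the monoid. -/
def dyckStep (m : ℕ) : Option (List (Letter m)) → Letter m → Option (List (Letter m))
  | none, _ => none
  | some s, Sum.inl i => some (Sum.inl i :: s)
  | some s, Sum.inr j =>
      match s with
      | Sum.inl i :: t => if i = j then some t else none
      | _ => some (Sum.inr j :: s)

/-- The reduction `red` of a word in the Dyck monoid with zero:
`none` is the zero element, `some s` is the reduced word (stored reversed),
and `some []` is the unit `1`. -/
def red {m : ℕ} (w : List (Letter m)) : Option (List (Letter m)) :=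
  w.foldl (dyckStep m) (some [])

/-- A word is admissible in the Dyck shift iff its reduction is nonzero. -/
def DyckAdmissible {m : ℕ} (w : List (Letter m)) : Prop := red w ≠ none

/-- Reversal-with-swap `ρ*` of a word: reverse the word and swap each
left bracket with the corresponding right bracket. -/
def rhoStar {m : ℕ} (w : List (Letter m)) : List (Letter m) :=
  (w.map Sum.swap).reverse

/-- The finite subword `ω_i ω_{i+1} ⋯ ω_{i+n-1}` of a two-sided sequence. -/
def wordAt {m : ℕ} (ω : ℤ → Letter m) (i : ℤ) (n : ℕ) : List (Letter m) :=
  List.ofFn fun k : Fin n => ω (i + k)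

/-- Membership in the two-sided Dyck shift: every finite subword is admissible. -/
def DyckSeq {m : ℕ} (ω : ℤ → Letter m) : Prop :=
  ∀ (i : ℤ) (n : ℕ), DyckAdmissible (wordAt ω i n)

/-!
`red` runs a stack machine, so every word `u` acts on the machine's states by `act u`, and
this action only depends on the reduced word of `u`. The map `ρ*` is an
anti-automorphism of the Dyck monoid, so `act (ρ* u)` is likewise the action of `ρ*` of the
reduced word. With `red w = ξη` this makes `w ρ*(w)` act as `ξ η ρ*(η) ρ*(ξ) = ξ ρ*(ξ)`, and
`ξ ρ*(ξ)` is idempotent because `ρ*(ξ) ξ = 1`.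
-/

namespace DyckReduction

open Sum

variable {m : ℕ}

def act (u : List (Letter m)) : Option (List (Letter m)) → Option (List (Letter m)) :=
  u.foldl (dyckStep m)

theorem red_eq_act (u : List (Letter m)) : red u = act u (some []) := rfl

theorem act_append (u v : List (Letter m)) : act (u ++ v) = act v ∘ act u :=
  funext fun _ => List.foldl_append

theorem act_cons (a : Letter m) (u : List (Letter m)) (X : Option (List (Letter m))) :
    act (a :: u) X = act u (dyckStep m X a) := rfl

theorem act_none (u : List (Letter m)) : act u none = none := by
  induction u with
  | nil => rfl
  | cons a u ih => exact ih

theorem act_inl_inr_self (i : Fin m) : act [inl i, inr i] = id := by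
  funext X
  cases X <;> simp [act, dyckStep]

theorem act_map_inl_append_map_inr_reverse (A : List (Fin m)) :
    act (A.map inl ++ A.reverse.map inr) = id := by
  induction A with
  | nil => rfl
  | cons i A ih =>
    have hsplit : (i :: A).map inl ++ (i :: A).reverse.map inr
        = [inl i] ++ (A.map inl ++ A.reverse.map inr) ++ [inr i] := by simp
    rw [hsplit, act_append, act_append, ih, Function.id_comp, ← act_append]
    exact act_inl_inr_self i

theorem act_append_cancel (u v : List (Letter m)) (A : List (Fin m)) :
    act (u ++ (A.map inl ++ A.reverse.map inr) ++ v) = act (u ++ v) := by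
  rw [act_append, act_append, act_map_inl_append_map_inr_reverse, act_append]
  rfl

theorem act_map_inl_some (A : List (Fin m)) (r : List (Letter m)) :
    act (A.map inl) (some r) = some (A.reverse.map inl ++ r) := by
  induction A generalizing r with
  | nil => rfl
  | cons i A ih =>
    rw [List.map_cons, act_cons]
    exact (ih (inl i :: r)).trans (by simp)

theorem act_map_inr_some (B C : List (Fin m)) :
    act (B.map inr) (some (C.map inr)) = some (B.reverse.map inr ++ C.map inr) := by
  induction B generalizing C with
  | nil => rfl
  | cons j B ih =>
    have hpush : dyckStep m (some (C.map inr)) (inr j) = some ((j :: C).map inr) := by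
      cases C <;> rfl
    rw [List.map_cons, act_cons, hpush, ih]
    simp

theorem red_map_inr_append_map_inl (B A : List (Fin m)) :
    red (B.map inr ++ A.map inl) = some (B.map inr ++ A.map inl).reverse := by
  have hB := act_map_inr_some B []
  simp only [List.map_nil, List.append_nil] at hB
  simp [red_eq_act, act_append, hB, act_map_inl_some]

theorem exists_red_eq_some_of_red_append_singleton {u s : List (Letter m)} {a : Letter m}
    (h : red (u ++ [a]) = some s) : ∃ s₀, red u = some s₀ ∧ dyckStep m (some s₀) a = some s := by
  rw [red_eq_act, act_append, Function.comp_apply, ← red_eq_act] at h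
  cases hu : red u with
  | none => rw [hu, act_none] at h; cases h
  | some s₀ => rw [hu] at h; exact ⟨s₀, rfl, h⟩

theorem eq_cons_or_cancel_of_dyckStep_eq_some {s s' : List (Letter m)} {a : Letter m}
    (h : dyckStep m (some s) a = some s') :
    s' = a :: s ∨ ∃ i, a = inr i ∧ s = inl i :: s' := by
  rcases a with i | j
  · exact Or.inl (Option.some_injective _ h).symm
  · rcases s with _ | ⟨i | i, t⟩
    · exact Or.inl (Option.some_injective _ h).symm
    · by_cases hij : i = j
      · subst hij
        simp only [dyckStep, if_true, Option.some.injEq] at h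
        exact Or.inr ⟨i, rfl, by rw [h]⟩
      · simp [dyckStep, hij] at h
    · exact Or.inl (Option.some_injective _ h).symm

theorem act_eq_act_reverse_of_red_eq_some {u s : List (Letter m)} (h : red u = some s) :
    act u = act s.reverse := by
  induction u using List.reverseRecOn generalizing s with
  | nil => cases h; rfl
  | append_singleton u a ih =>
    obtain ⟨s₀, hs₀, h⟩ := exists_red_eq_some_of_red_append_singleton h
    have hstep : act (u ++ [a]) = act (a :: s₀).reverse := by
      rw [act_append, ih hs₀, List.reverse_cons, act_append]
    rcases eq_cons_or_cancel_of_dyckStep_eq_some h with rfl | ⟨i, rfl, rfl⟩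
    · exact hstep
    · rw [hstep, show (inr i :: inl i :: s).reverse = s.reverse ++ [inl i, inr i] by simp,
        act_append, act_inl_inr_self]
      rfl

theorem act_rhoStar_of_red_eq_some {u s : List (Letter m)} (h : red u = some s) :
    act (rhoStar u) = act (s.map swap) := by
  induction u using List.reverseRecOn generalizing s with
  | nil => cases h; rfl
  | append_singleton u a ih =>
    obtain ⟨s₀, hs₀, h⟩ := exists_red_eq_some_of_red_append_singleton h
    have hstep : act (rhoStar (u ++ [a])) = act ((a :: s₀).map swap) := by
      rw [show rhoStar (u ++ [a]) = [swap a] ++ rhoStar u by simp [rhoStar], act_append,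
        ih hs₀, ← act_append]
      rfl
    rcases eq_cons_or_cancel_of_dyckStep_eq_some h with rfl | ⟨i, rfl, rfl⟩
    · exact hstep
    · rw [hstep, show (inr i :: inl i :: s).map swap = [inl i, inr i] ++ s.map swap by simp,
        act_append, act_inl_inr_self]
      rfl

theorem act_flatten_replicate_of_idempotent {P : List (Letter m)}
    (hP : act (P ++ P) = act P) {j : ℕ} (hj : 1 ≤ j) :
    act (List.replicate j P).flatten = act P := by
  induction j, hj using Nat.le_induction with
  | base => simp
  | succ k _ ih => rw [List.replicate_succ, List.flatten_cons, act_append, ih, ← act_append, hP]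

theorem red_flatten_replicate_append_rhoStar {w s : List (Letter m)} {ξ η : List (Fin m)}
    (hw : red w = some s) (hs : s.reverse = ξ.map inr ++ η.map inl) {j : ℕ} (hj : 1 ≤ j) :
    red (List.replicate j (w ++ rhoStar w)).flatten
      = some (ξ.map inr ++ ξ.reverse.map inl).reverse := by
  set Q : List (Letter m) := ξ.map inr ++ ξ.reverse.map inl
  have hρ : s.map swap = η.reverse.map inr ++ ξ.reverse.map inl := by
    rw [← List.reverse_reverse s, hs]
    simp [List.map_reverse, Function.comp_def]
  have hPQ : act (w ++ rhoStar w) = act Q := by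
    rw [act_append, act_rhoStar_of_red_eq_some hw, act_eq_act_reverse_of_red_eq_some hw, hs,
      hρ, ← act_append]
    have hcancel : ξ.map inr ++ η.map inl ++ (η.reverse.map inr ++ ξ.reverse.map inl)
        = ξ.map inr ++ (η.map inl ++ η.reverse.map inr) ++ ξ.reverse.map inl := by simp
    rw [hcancel, act_append_cancel]
  have hQQ : act (Q ++ Q) = act Q := by
    have hsplit : Q ++ Q = ξ.map inr ++ (ξ.reverse.map inl ++ ξ.reverse.reverse.map inr)
        ++ ξ.reverse.map inl := by simp [Q]
    rw [hsplit, act_append_cancel]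
  have hidem : act ((w ++ rhoStar w) ++ (w ++ rhoStar w)) = act (w ++ rhoStar w) := by
    rw [act_append, hPQ, ← act_append, hQQ]
  rw [red_eq_act, act_flatten_replicate_of_idempotent hidem hj, hPQ, ← red_eq_act]
  exact red_map_inr_append_map_inl ξ ξ.reverse

end DyckReduction

open DyckReduction in
theorem red_of_periodic_word_general {m : ℕ} (w : List (Letter m)) :
    (red w = some [] → ∀ j : ℕ, 1 ≤ j →
        red ((List.replicate j (w ++ rhoStar w)).flatten) = some []) ∧
    ∀ (s : List (Letter m)) (ξ η : List (Fin m)),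
      red w = some s → s.reverse = ξ.map Sum.inr ++ η.map Sum.inl →
      ∀ j : ℕ, 1 ≤ j →
        red ((List.replicate j (w ++ rhoStar w)).flatten)
          = some ((ξ.map Sum.inr ++ (ξ.reverse.map Sum.inl : List (Letter m))).reverse) :=
  ⟨fun hw _ hj => red_flatten_replicate_append_rhoStar (ξ := []) (η := []) hw rfl hj,
    fun _ _ _ hw hs _ hj => red_flatten_replicate_append_rhoStar hw hs hj⟩

/-- If `red w = 1` then `red((w ρ*(w))^j) = 1` for all `j ≥ 1`;
and if the reduced word of `w` is `ξη` (with `ξ` in right brackets, `η` in left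
brackets), then the reduced word of `(w ρ*(w))^j` is `ξ ρ*(ξ)` for all `j ≥ 1`. -/
theorem red_of_periodic_word {m : ℕ} (hm : 2 ≤ m) (w : List (Letter m))
    (hw : DyckAdmissible w) :
    (red w = some [] → ∀ j : ℕ, 1 ≤ j →
        red ((List.replicate j (w ++ rhoStar w)).flatten) = some []) ∧
    ∀ (s : List (Letter m)) (ξ η : List (Fin m)),
      red w = some s → s.reverse = ξ.map Sum.inr ++ η.map Sum.inl →
      ∀ j : ℕ, 1 ≤ j →
        red ((List.replicate j (w ++ rhoStar w)).flatten)
          = some ((ξ.map Sum.inr ++ (ξ.reverse.map Sum.inl : List (Letter m))).reverse) :=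
  red_of_periodic_word_general w
end

section
/- The follower set graph of the one-sided Dyck shift has vertex set {Θ^ξ : ξ a finite word in the left brackets α₁,...,α_m}, and for any such ξ and any i ∈ {1,...,m}: Θ^{ξ α_i β_i} = Θ^ξ, and Θ^{β_i} = Θ^∅ (the follower set of any single right bracket equals the follower set of the empty word). -/
/-- Finite subwords of a one-sided sequence. -/
def wordAtN {m : ℕ} (ω : ℕ → Letter m) (i n : ℕ) : List (Letter m) :=
  List.ofFn fun k : Fin n => ω (i + k)

/-- Membership in the one-sided Dyck shift `Σ_D⁺`. -/
def DyckSeqPlus {m : ℕ} (ω : ℕ → Letter m) : Prop :=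
  ∀ (i n : ℕ), DyckAdmissible (wordAtN ω i n)

/-- The concatenation `ξη` of a finite word `ξ` with a one-sided sequence `η`. -/
def prependWord {m : ℕ} (ξ : List (Letter m)) (η : ℕ → Letter m) : ℕ → Letter m :=
  fun n => if h : n < ξ.length then ξ.get ⟨n, h⟩ else η (n - ξ.length)

/-- The follower set `Θ^ξ = {η ∈ Σ_D⁺ : ξη ∈ Σ_D⁺}` of a word `ξ`. -/
def followerSet {m : ℕ} (ξ : List (Letter m)) : Set (ℕ → Letter m) :=
  {η | DyckSeqPlus (prependWord ξ η)}

/-! A sequence `ξη` lies in `Σ_D⁺` iff `η` does and every word `s · (prefix of η)` with `s` a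
suffix of `ξ` is admissible. Whether `s · v` is admissible depends on `s` only through its
reduction, and a leading right bracket is never cancelled. Hence deleting a leading `βⱼ`, or a
cancelling pair `αᵢ βᵢ`, does not change the follower set. An admissible word that is not a word
in left brackets has one of these two deletions available (an adjacent `αᵢ βₖ` with `i ≠ k` would
reduce to zero), so repeating them reaches a word in left brackets. -/

section Reduction

variable {m : ℕ}

@[simp]
lemma foldl_dyckStep_none (w : List (Letter m)) : w.foldl (dyckStep m) none = none := by
  induction w with
  | nil => rfl
  | cons _ _ ih => exact ih

lemma red_append (u v : List (Letter m)) : red (u ++ v) = v.foldl (dyckStep m) (red u) :=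
  List.foldl_append

lemma red_inl_inr_cancel (u w : List (Letter m)) (i : Fin m) :
    red (u ++ Sum.inl i :: Sum.inr i :: w) = red (u ++ w) := by
  rw [red_append, red_append]
  cases red u <;> simp [dyckStep]

lemma red_inl_inr_eq_none (u w : List (Letter m)) {i k : Fin m} (hik : i ≠ k) :
    red (u ++ Sum.inl i :: Sum.inr k :: w) = none := by
  rw [red_append]
  cases red u <;> simp [dyckStep, hik]

lemma dyckStep_map_append_inr (j : Fin m) (X : Option (List (Letter m))) (a : Letter m) :
    dyckStep m (X.map (· ++ [Sum.inr j])) a = (dyckStep m X a).map (· ++ [Sum.inr j]) := by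
  rcases X with _ | _ | ⟨_ | _, _⟩ <;> rcases a with _ | _ <;> simp [dyckStep]

lemma red_inr_cons (j : Fin m) (y : List (Letter m)) :
    red (Sum.inr j :: y) = (red y).map (· ++ [Sum.inr j]) :=
  List.foldl_hom (l := y) (init := some []) _ (dyckStep_map_append_inr j)

lemma DyckAdmissible.of_prefix {u v : List (Letter m)} (huv : u <+: v) (hv : DyckAdmissible v) :
    DyckAdmissible u := by
  obtain ⟨t, rfl⟩ := huv
  intro hu
  apply hv
  rw [red_append, hu, foldl_dyckStep_none]

lemma dyckAdmissible_inr_cons_iff {j : Fin m} {y : List (Letter m)} :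
    DyckAdmissible (Sum.inr j :: y) ↔ DyckAdmissible y := by
  simp [DyckAdmissible, red_inr_cons]

lemma dyckAdmissible_inl_inr_cancel_iff {u w : List (Letter m)} {i : Fin m} :
    DyckAdmissible (u ++ Sum.inl i :: Sum.inr i :: w) ↔ DyckAdmissible (u ++ w) := by
  rw [DyckAdmissible, red_inl_inr_cancel, DyckAdmissible]

lemma eq_of_dyckAdmissible_inl_inr {u w : List (Letter m)} {i k : Fin m}
    (h : DyckAdmissible (u ++ Sum.inl i :: Sum.inr k :: w)) : i = k :=
  by_contra fun hik => h (red_inl_inr_eq_none u w hik)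

end Reduction

section Sequences

variable {m : ℕ}

lemma wordAtN_add (ω : ℕ → Letter m) (i a b : ℕ) :
    wordAtN ω i (a + b) = wordAtN ω i a ++ wordAtN ω (i + a) b := by
  simp only [wordAtN, List.ofFn_add]
  congr 2 with k
  simp [add_assoc]

lemma wordAtN_prefix (ω : ℕ → Letter m) (i : ℕ) {n k : ℕ} (hnk : n ≤ k) :
    wordAtN ω i n <+: wordAtN ω i k := by
  obtain ⟨c, rfl⟩ := Nat.exists_eq_add_of_le hnk
  rw [wordAtN_add]
  exact List.prefix_append _ _

lemma prependWord_nil (η : ℕ → Letter m) : prependWord [] η = η := by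
  funext n
  simp [prependWord]

lemma prependWord_add (ξ : List (Letter m)) (η : ℕ → Letter m) {j : ℕ} (hj : j ≤ ξ.length)
    (k : ℕ) : prependWord ξ η (j + k) = prependWord (ξ.drop j) η k := by
  by_cases hk : j + k < ξ.length
  · simp [prependWord, hk, show k < ξ.length - j by omega]
  · simp only [prependWord, hk, List.length_drop, show ¬k < ξ.length - j by omega, dite_false]
    congr 1
    omega

lemma wordAtN_prependWord (ξ : List (Letter m)) (η : ℕ → Letter m) {j : ℕ}
    (hj : j ≤ ξ.length) (t n : ℕ) :
    wordAtN (prependWord ξ η) (j + t) n = wordAtN (prependWord (ξ.drop j) η) t n := by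
  simp only [wordAtN, add_assoc, prependWord_add ξ η hj]

lemma wordAtN_prependWord_zero (ξ : List (Letter m)) (η : ℕ → Letter m) (n : ℕ) :
    wordAtN (prependWord ξ η) 0 (ξ.length + n) = ξ ++ wordAtN η 0 n := by
  rw [wordAtN_add, zero_add, ← add_zero ξ.length, wordAtN_prependWord ξ η le_rfl,
    List.drop_length, prependWord_nil]
  congr 1
  apply List.ext_getElem <;> simp [wordAtN, prependWord]

theorem dyckSeqPlus_prependWord_iff (ξ : List (Letter m)) (η : ℕ → Letter m) :
    DyckSeqPlus (prependWord ξ η) ↔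
      DyckSeqPlus η ∧ ∀ s, s <:+ ξ → ∀ n, DyckAdmissible (s ++ wordAtN η 0 n) := by
  have tail (t n : ℕ) : wordAtN (prependWord ξ η) (ξ.length + t) n = wordAtN η t n := by
    rw [wordAtN_prependWord ξ η le_rfl, List.drop_length, prependWord_nil]
  have inside {j : ℕ} (hj : j ≤ ξ.length) (n : ℕ) :
      wordAtN (prependWord ξ η) j n = wordAtN (prependWord (ξ.drop j) η) 0 n := by
    simpa using wordAtN_prependWord ξ η hj 0 n
  constructor
  · intro H
    refine ⟨fun t n => tail t n ▸ H _ n, fun s hs n => ?_⟩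
    rw [List.suffix_iff_eq_drop.1 hs, ← wordAtN_prependWord_zero, ← inside (Nat.sub_le _ _)]
    exact H _ _
  · rintro ⟨Hη, Hs⟩ i n
    rcases le_or_gt ξ.length i with hi | hi
    · obtain ⟨t, rfl⟩ := Nat.exists_eq_add_of_le hi
      exact tail t n ▸ Hη t n
    · rw [inside hi.le]
      refine DyckAdmissible.of_prefix (wordAtN_prefix _ 0 (Nat.le_add_left n (ξ.drop i).length)) ?_
      rw [wordAtN_prependWord_zero]
      exact Hs _ (List.drop_suffix i ξ) n

end Sequences

lemma List.forall_suffix_cons_iff {α : Type*} {P : List α → Prop} {a : α} {l : List α} :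
    (∀ s, s <:+ a :: l → P s) ↔ P (a :: l) ∧ ∀ s, s <:+ l → P s := by
  simp [List.suffix_cons_iff, or_imp, forall_and]

lemma List.eq_map_inl_or_inr_cons_or_inl_inr_infix {α β : Type*} (l : List (α ⊕ β)) :
    (∃ a : List α, l = a.map Sum.inl) ∨ (∃ b w, l = Sum.inr b :: w) ∨
      ∃ u a b w, l = u ++ Sum.inl a :: Sum.inr b :: w := by
  induction l with
  | nil => exact Or.inl ⟨[], rfl⟩
  | cons x l ih =>
    rcases x with a | b
    · rcases ih with ⟨as, rfl⟩ | ⟨b, w, rfl⟩ | ⟨u, a', b, w, rfl⟩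
      · exact Or.inl ⟨a :: as, rfl⟩
      · exact Or.inr (Or.inr ⟨[], a, b, w, rfl⟩)
      · exact Or.inr (Or.inr ⟨Sum.inl a :: u, a', b, w, rfl⟩)
    · exact Or.inr (Or.inl ⟨b, l, rfl⟩)

section FollowerSets

variable {m : ℕ}

lemma followerSet_inr_cons (j : Fin m) (w : List (Letter m)) :
    followerSet (Sum.inr j :: w) = followerSet w := by
  ext η
  simp only [followerSet, Set.mem_ofPred_eq, dyckSeqPlus_prependWord_iff,
    List.forall_suffix_cons_iff, List.cons_append, dyckAdmissible_inr_cons_iff]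
  exact and_congr_right fun _ => and_iff_right_of_imp fun h => h w List.suffix_rfl

lemma followerSet_inl_inr_cancel (u w : List (Letter m)) (i : Fin m) :
    followerSet (u ++ Sum.inl i :: Sum.inr i :: w) = followerSet (u ++ w) := by
  ext η
  simp only [followerSet, Set.mem_ofPred_eq, dyckSeqPlus_prependWord_iff]
  refine and_congr_right fun _ => ?_
  induction u with
  | nil =>
    simp only [List.nil_append, List.forall_suffix_cons_iff, List.cons_append,
      dyckAdmissible_inr_cons_iff]
    refine ⟨fun h => h.2.2, fun h => ⟨fun n => ?_, h w List.suffix_rfl, h⟩⟩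
    simpa using
      dyckAdmissible_inl_inr_cancel_iff (u := []) (w := w ++ wordAtN η 0 n) (i := i) |>.2
        (h w List.suffix_rfl n)
  | cons a u ih =>
    simp only [List.cons_append, List.forall_suffix_cons_iff, ih]
    refine and_congr_left' (forall_congr' fun n => ?_)
    simpa only [List.cons_append, List.append_assoc] using
      dyckAdmissible_inl_inr_cancel_iff (u := a :: u) (w := w ++ wordAtN η 0 n) (i := i)

theorem exists_followerSet_eq_map_inl (ξ : List (Letter m)) (h : DyckAdmissible ξ) :
    ∃ a : List (Fin m), followerSet ξ = followerSet (a.map Sum.inl) := by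
  rcases ξ.eq_map_inl_or_inr_cons_or_inl_inr_infix with ⟨a, rfl⟩ | ⟨j, w, hξ⟩ | ⟨u, i, k, w, hξ⟩
  · exact ⟨a, rfl⟩
  · subst hξ
    obtain ⟨a, ha⟩ := exists_followerSet_eq_map_inl w (dyckAdmissible_inr_cons_iff.1 h)
    exact ⟨a, (followerSet_inr_cons j w).trans ha⟩
  · subst hξ
    obtain rfl := eq_of_dyckAdmissible_inl_inr h
    obtain ⟨a, ha⟩ :=
      exists_followerSet_eq_map_inl (u ++ w) (dyckAdmissible_inl_inr_cancel_iff.1 h)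
    exact ⟨a, (followerSet_inl_inr_cancel u w i).trans ha⟩
termination_by ξ.length
decreasing_by all_goals subst_vars; simp

end FollowerSets

theorem dyck_follower_sets_general {m : ℕ} :
    (∀ ξ : List (Letter m), DyckAdmissible ξ →
      ∃ η : List (Fin m), followerSet ξ = followerSet (η.map Sum.inl)) ∧
    (∀ (ξ : List (Fin m)) (i : Fin m),
      followerSet ((ξ.map Sum.inl : List (Letter m)) ++ [Sum.inl i, Sum.inr i])
        = followerSet (ξ.map Sum.inl)) ∧
    (∀ i : Fin m, followerSet ([Sum.inr i] : List (Letter m)) = followerSet []) :=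
  ⟨exists_followerSet_eq_map_inl,
    fun ξ i => by simpa using followerSet_inl_inr_cancel (ξ.map Sum.inl) [] i,
    fun i => followerSet_inr_cons i []⟩

/-- Every follower set of the one-sided Dyck shift equals the
follower set of some word in the left brackets; moreover `Θ^{ξ αᵢ βᵢ} = Θ^ξ`
for any word `ξ` in left brackets, and `Θ^{βᵢ} = Θ^∅`. -/
theorem dyck_follower_sets {m : ℕ} (hm : 2 ≤ m) :
    (∀ ξ : List (Letter m), DyckAdmissible ξ →
      ∃ η : List (Fin m), followerSet ξ = followerSet (η.map Sum.inl)) ∧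
    (∀ (ξ : List (Fin m)) (i : Fin m),
      followerSet ((ξ.map Sum.inl : List (Letter m)) ++ [Sum.inl i, Sum.inr i])
        = followerSet (ξ.map Sum.inl)) ∧
    (∀ i : Fin m, followerSet ([Sum.inr i] : List (Letter m)) = followerSet []) :=
  dyck_follower_sets_general
end

section
/- The two-sided heterochaos shift is the natural extension of the one-sided heterochaos shift: Σ_{HC} = {ω ∈ {1,...,2m}^ℤ : (ω_n)_{n ≥ −k} ∈ Σ_{HC}⁺ for all k ≥ 1}. -/
/-- The one-dimensional factor map `F_a` on `[0,1]`:
`x ↦ (x-(i-1)a)/a` on `[(i-1)a, ia)` and `x ↦ (x-ma)/(1-ma)` on `[ma,1]`. -/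
noncomputable def bakerF (m : ℕ) (a : ℝ) (x : ℝ) : ℝ :=
  if x < m * a then Int.fract (x / a) else (x - m * a) / (1 - m * a)

/-- The index `i - m - 1 ∈ {0,…,m-1}` of the horizontal strip containing `y`. -/
noncomputable def stripIndex (m : ℕ) (y : ℝ) : ℤ := min ⌊(m : ℝ) * y⌋ ((m : ℤ) - 1)

/-- The two-dimensional generalized heterochaos baker map `f_a` on `[0,1]²`. -/
noncomputable def baker2 (m : ℕ) (a : ℝ) (p : ℝ × ℝ) : ℝ × ℝ :=
  if p.1 < m * a then
    (bakerF m a p.1, p.2 / m + (⌊p.1 / a⌋ : ℝ) / m)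
  else
    (bakerF m a p.1, m * p.2 - (stripIndex m p.2 : ℝ))

/-- The three-dimensional generalized heterochaos baker map `f_{a,b}` on `[0,1]³`. -/
noncomputable def baker3 (m : ℕ) (a b : ℝ) (p : ℝ × ℝ × ℝ) : ℝ × ℝ × ℝ :=
  if p.1 < m * a then
    ((baker2 m a (p.1, p.2.1)).1, (baker2 m a (p.1, p.2.1)).2, (1 - m * b) * p.2.2)
  else
    ((baker2 m a (p.1, p.2.1)).1, (baker2 m a (p.1, p.2.1)).2,
      b * p.2.2 + 1 - m * b + b * (stripIndex m p.2.1 : ℝ))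

/-- The domains `Ω_i⁺ ⊂ [0,1]²`, indexed by the Dyck alphabet:
`Sum.inl i` (a left bracket) labels the vertical strip `[ia,(i+1)a) × [0,1]`,
`Sum.inr i` (a right bracket) labels the horizontal strip of `[ma,1] × [0,1]`. -/
noncomputable def Omega2 (m : ℕ) (a : ℝ) : Letter m → Set (ℝ × ℝ)
  | Sum.inl i => Set.Ico ((i : ℝ) * a) (((i : ℝ) + 1) * a) ×ˢ Set.Icc 0 1
  | Sum.inr i =>
      Set.Icc ((m : ℝ) * a) 1 ×ˢ
        (if (i : ℕ) = m - 1 then Set.Icc ((i : ℝ) / m) 1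
         else Set.Ico ((i : ℝ) / m) (((i : ℝ) + 1) / m))

/-- The domains `Ω_i = Ω_i⁺ × [0,1] ⊂ [0,1]³`. -/
noncomputable def Omega3 (m : ℕ) (a : ℝ) (γ : Letter m) : Set (ℝ × ℝ × ℝ) :=
  {p | (p.1, p.2.1) ∈ Omega2 m a γ ∧ p.2.2 ∈ Set.Icc (0 : ℝ) 1}

/-- `Codes2 m a p ω` says that the forward `f_a`-orbit of `p ∈ [0,1]²` visits
the interiors of the domains `Ω⁺` in the order prescribed by `ω`; i.e. `p ∈ X_a`
and `ω` is its coding. -/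
def Codes2 (m : ℕ) (a : ℝ) (p : ℝ × ℝ) (ω : ℕ → Letter m) : Prop :=
  ∀ n : ℕ, (baker2 m a)^[n] p ∈ interior (Omega2 m a (ω n))

/-- `Codes3 m a b p ω` says that `p` has a full (two-sided) `f_{a,b}`-orbit
passing through the interiors of the domains `Ω` in the order prescribed by
`ω`; i.e. `p ∈ X_{a,b}` and `ω` is its coding `π̄(p)` (in the Dyck alphabet). -/
def Codes3 (m : ℕ) (a b : ℝ) (p : ℝ × ℝ × ℝ) (ω : ℤ → Letter m) : Prop :=
  ∃ o : ℤ → ℝ × ℝ × ℝ, o 0 = p ∧ (∀ n : ℤ, o (n + 1) = baker3 m a b (o n)) ∧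
    ∀ n : ℤ, o n ∈ interior (Omega3 m a (ω n))

/-- The set `X = X_{a,b}` of points whose full orbit stays in the interiors. -/
def Xset (m : ℕ) (a b : ℝ) : Set (ℝ × ℝ × ℝ) := {p | ∃ ω, Codes3 m a b p ω}

/-- The image `π̄(X)` of the coding map, inside the Dyck-alphabet full shift. -/
def piImage (m : ℕ) (a b : ℝ) : Set (ℤ → Letter m) := {ω | ∃ p, Codes3 m a b p ω}

/-- The one-sided heterochaos shift `Σ_{HC}⁺ = cl(π_a(X_a))`. -/
noncomputable def SigmaHCplus (m : ℕ) (a : ℝ) : Set (ℕ → Letter m) :=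
  closure {ω | ∃ p, Codes2 m a p ω}

/-- The two-sided heterochaos shift `Σ_{HC} = cl(π_{a,b}(X_{a,b}))`. -/
noncomputable def SigmaHC (m : ℕ) (a b : ℝ) : Set (ℤ → Letter m) :=
  closure (piImage m a b)

/-!
The projection `(x, y, z) ↦ (x, y)` semiconjugates `f_{a,b}` to `f_a` and maps `Ω_γ` onto `Ω_γ⁺`,
so every tail of a two-sided coding is a one-sided coding; as the right-hand side is closed, this
gives `⊆`. Conversely, a one-sided coding `σ` of a point `p` extends to the two-sided coding
`⋯ β₁ β₁ σ`: run `f_{a,b}` forward from `(p, z*)` and backward along the inverse branch over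
`Ω_{β₁}`, which keeps `(x, y)` in `(0,1)²` and fixes the height `z*`. Approximating the tails of
`ω` by such codings and shifting them back gives `⊇` in the product topology.
-/

open Set Function Filter Topology

theorem mem_closure_iff_forall_finset_exists_eqOn {ι α : Type*} [TopologicalSpace α]
    [DiscreteTopology α] {T : Set (ι → α)} {ω : ι → α} :
    ω ∈ closure T ↔ ∀ s : Finset ι, ∃ ξ ∈ T, ∀ i ∈ s, ξ i = ω i := by
  constructor
  · intro hω s
    have hopen : IsOpen ((s : Set ι).pi fun i => {ω i}) :=
      isOpen_set_pi s.finite_toSet fun i _ => isOpen_discrete _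
    obtain ⟨ξ, hξs, hξT⟩ := mem_closure_iff.1 hω _ hopen fun i _ => rfl
    exact ⟨ξ, hξT, hξs⟩
  · intro h
    choose ξ hξT hξ using h
    refine mem_closure_of_tendsto (b := atTop) (tendsto_pi_nhds.2 fun i => ?_)
      (Eventually.of_forall hξT)
    refine tendsto_const_nhds.congr' ?_
    filter_upwards [eventually_ge_atTop {i}] with s hs
    exact (hξ s i (Finset.singleton_subset_iff.1 hs)).symm

theorem isClosed_setOf_forall_shift_mem {α : Type*} [TopologicalSpace α] {S : Set (ℕ → α)}
    (hS : IsClosed S) :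
    IsClosed {ω : ℤ → α | ∀ k : ℕ, 1 ≤ k → (fun n : ℕ => ω ((n : ℤ) - (k : ℤ))) ∈ S} := by
  simp only [ofPred_forall]
  exact isClosed_iInter fun k => isClosed_iInter fun _ => hS.preimage (by fun_prop)

section TwoSidedOrbit

variable {X : Type*} {f g : X → X} {S : Set X} {x : X}

def twoSidedOrbit (f g : X → X) (x : X) (n : ℤ) : X :=
  if 0 ≤ n then f^[n.toNat] x else g^[(-n).toNat] x

theorem twoSidedOrbit_of_nonpos {n : ℤ} (hn : n ≤ 0) :
    twoSidedOrbit f g x n = g^[(-n).toNat] x := by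
  unfold twoSidedOrbit
  split_ifs with h
  · obtain rfl : n = 0 := le_antisymm hn h
    rfl
  · rfl

theorem twoSidedOrbit_succ (hg : MapsTo g S S) (hfg : ∀ q ∈ S, f (g q) = q) (hx : x ∈ S)
    (n : ℤ) : twoSidedOrbit f g x (n + 1) = f (twoSidedOrbit f g x n) := by
  by_cases hn : 0 ≤ n
  · have hsucc : (n + 1).toNat = n.toNat + 1 := by omega
    simp only [twoSidedOrbit, if_pos hn, if_pos (by omega : 0 ≤ n + 1), hsucc,
      iterate_succ_apply']
  · have hpred : (-n).toNat = (-(n + 1)).toNat + 1 := by omega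
    rw [twoSidedOrbit_of_nonpos (by omega), twoSidedOrbit, if_neg hn, hpred,
      iterate_succ_apply', hfg _ (hg.iterate _ hx)]

end TwoSidedOrbit

theorem apply_add_natCast_eq_iterate {X : Type*} {o : ℤ → X} {f : X → X}
    (ho : ∀ n, o (n + 1) = f (o n)) (j : ℤ) (t : ℕ) : o (j + t) = f^[t] (o j) := by
  induction t with
  | zero => simp
  | succ t ih => rw [Nat.cast_succ, ← add_assoc, ho, ih, iterate_succ_apply']

section Baker

variable {m : ℕ} {a b : ℝ}

theorem semiconj_baker3_baker2 :
    Semiconj (fun p : ℝ × ℝ × ℝ => (p.1, p.2.1)) (baker3 m a b) (baker2 m a) := by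
  intro p
  by_cases h : p.1 < m * a <;> simp [baker3, baker2, h]

theorem interior_Omega2_inl (i : Fin m) :
    interior (Omega2 m a (Sum.inl i)) = Ioo ((i : ℝ) * a) (((i : ℝ) + 1) * a) ×ˢ Ioo 0 1 := by
  simp only [Omega2, interior_prod_eq, interior_Ico, interior_Icc]

theorem interior_Omega2_inr (i : Fin m) :
    interior (Omega2 m a (Sum.inr i)) =
      Ioo ((m : ℝ) * a) 1 ×ˢ
        (if (i : ℕ) = m - 1 then Ioo ((i : ℝ) / m) 1 else Ioo ((i : ℝ) / m) (((i : ℝ) + 1) / m)) := by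
  simp only [Omega2, interior_prod_eq, interior_Icc]
  split_ifs <;> simp [interior_Icc, interior_Ico]

theorem interior_Omega3 (γ : Letter m) :
    interior (Omega3 m a γ) =
      {p : ℝ × ℝ × ℝ | (p.1, p.2.1) ∈ interior (Omega2 m a γ) ∧ p.2.2 ∈ Ioo 0 1} := by
  have h : Omega3 m a γ = (Homeomorph.prodAssoc ℝ ℝ ℝ).symm ⁻¹' (Omega2 m a γ ×ˢ Icc 0 1) := rfl
  rw [h, ← Homeomorph.preimage_interior, interior_prod_eq, interior_Icc]
  rfl

theorem interior_Omega2_subset (ha0 : 0 ≤ a) (hma : m * a < 1) (γ : Letter m) :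
    interior (Omega2 m a γ) ⊆ Ioo 0 1 ×ˢ Ioo 0 1 := by
  cases γ with
  | inl i =>
    rw [interior_Omega2_inl]
    rintro ⟨x, y⟩ ⟨⟨hx₁, hx₂⟩, hy⟩
    have hi : (i : ℝ) + 1 ≤ m := by exact_mod_cast i.isLt
    have hi₀ : (0 : ℝ) ≤ i := Nat.cast_nonneg _
    exact ⟨⟨by nlinarith, by nlinarith⟩, hy⟩
  | inr i =>
    rw [interior_Omega2_inr]
    rintro ⟨x, y⟩ ⟨⟨hx₁, hx₂⟩, hy⟩
    have hm : (0 : ℝ) < m := by exact_mod_cast i.pos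
    have hi : (i : ℝ) + 1 ≤ m := by exact_mod_cast i.isLt
    refine ⟨⟨by nlinarith, hx₂⟩, ?_⟩
    split_ifs at hy
    · exact ⟨(by positivity : (0 : ℝ) ≤ i / m).trans_lt hy.1, hy.2⟩
    · exact ⟨(by positivity : (0 : ℝ) ≤ i / m).trans_lt hy.1,
        hy.2.trans_le ((div_le_one hm).2 hi)⟩

theorem stripIndex_nonneg (hm : 0 < m) {y : ℝ} (hy : 0 ≤ y) : 0 ≤ stripIndex m y :=
  le_min (Int.floor_nonneg.2 (by positivity)) (by omega)

theorem baker3_snd_snd_mem_Ioo (hm : 0 < m) (hb0 : 0 < b) (hmb : m * b < 1)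
    {p : ℝ × ℝ × ℝ} (hy : 0 ≤ p.2.1) (hz : p.2.2 ∈ Ioo 0 1) :
    (baker3 m a b p).2.2 ∈ Ioo 0 1 := by
  obtain ⟨hz₀, hz₁⟩ := hz
  unfold baker3
  split
  · exact ⟨by nlinarith, by nlinarith⟩
  · have hj₀ : (0 : ℝ) ≤ stripIndex m p.2.1 := by exact_mod_cast stripIndex_nonneg hm hy
    have hj₁ : (stripIndex m p.2.1 : ℝ) ≤ m - 1 := by
      exact_mod_cast (min_le_right _ _ : stripIndex m p.2.1 ≤ m - 1)
    exact ⟨by nlinarith, by nlinarith⟩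

theorem baker3_iterate_mem_interior (hm : 0 < m) (ha0 : 0 ≤ a) (hma : m * a < 1)
    (hb0 : 0 < b) (hmb : m * b < 1) {p : ℝ × ℝ} {σ : ℕ → Letter m} (hp : Codes2 m a p σ)
    {z : ℝ} (hz : z ∈ Ioo 0 1) (t : ℕ) :
    (baker3 m a b)^[t] (p.1, p.2, z) ∈ interior (Omega3 m a (σ t)) := by
  have hproj : ∀ t : ℕ, (((baker3 m a b)^[t] (p.1, p.2, z)).1,
      ((baker3 m a b)^[t] (p.1, p.2, z)).2.1) = (baker2 m a)^[t] p :=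
    fun t => semiconj_baker3_baker2.iterate_right t _
  rw [interior_Omega3]
  induction t with
  | zero => exact ⟨hp 0, hz⟩
  | succ t ih =>
    refine ⟨hproj (t + 1) ▸ hp (t + 1), ?_⟩
    have hy := (interior_Omega2_subset ha0 hma _ (hproj t ▸ hp t)).2.1.le
    rw [iterate_succ_apply']
    exact baker3_snd_snd_mem_Ioo hm hb0 hmb hy ih.2

end Baker

section InverseBranch

variable {m : ℕ} {a b : ℝ}

/-- The fixed point of the contraction `z ↦ b z + 1 - m b`, which is `f_{a,b}` in the `z`-direction
over the strip `Ω_{β₁}`. -/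
noncomputable def zStar (m : ℕ) (b : ℝ) : ℝ := (1 - m * b) / (1 - b)

/-- The inverse of `f_{a,b}` on `Ω_{β₁}`, with the `z`-coordinate pinned to `zStar`. -/
noncomputable def backBeta (m : ℕ) (a b : ℝ) (q : ℝ × ℝ × ℝ) : ℝ × ℝ × ℝ :=
  (m * a + q.1 * (1 - m * a), q.2.1 / m, zStar m b)

theorem zStar_mem_Ioo (hm : 2 ≤ m) (hb0 : 0 < b) (hmb : m * b < 1) : zStar m b ∈ Ioo 0 1 := by
  have hm' : (2 : ℝ) ≤ m := by exact_mod_cast hm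
  have hb1 : b < 1 := by nlinarith
  exact ⟨div_pos (by linarith) (by linarith), (div_lt_one (by linarith)).2 (by nlinarith)⟩

theorem mapsTo_backBeta (hm : 0 < m) (ha0 : 0 ≤ a) (hma : m * a < 1) :
    MapsTo (backBeta m a b) (Ioo 0 1 ×ˢ Ioo 0 1 ×ˢ {zStar m b})
      (Ioo 0 1 ×ˢ Ioo 0 1 ×ˢ {zStar m b}) := by
  rintro q ⟨⟨hx₀, hx₁⟩, ⟨hy₀, hy₁⟩, -⟩
  have hm' : (1 : ℝ) ≤ m := by exact_mod_cast hm
  have hma₀ : 0 ≤ (m : ℝ) * a := by positivity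
  exact ⟨⟨by simp only [backBeta]; nlinarith, by simp only [backBeta]; nlinarith⟩,
    ⟨by simp only [backBeta]; positivity, (div_lt_one (by positivity)).2 (by linarith)⟩, rfl⟩

theorem backBeta_mem_interior (hm : 2 ≤ m) (hma : m * a < 1) (hb0 : 0 < b) (hmb : m * b < 1)
    {q : ℝ × ℝ × ℝ} (hq : q ∈ Ioo 0 1 ×ˢ Ioo 0 1 ×ˢ {zStar m b}) :
    backBeta m a b q ∈ interior (Omega3 m a (Sum.inr ⟨0, by omega⟩)) := by
  obtain ⟨⟨hx₀, hx₁⟩, ⟨hy₀, hy₁⟩, -⟩ := hq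
  have hm' : (0 : ℝ) < m := by positivity
  rw [interior_Omega3, mem_ofPred_eq, interior_Omega2_inr, if_neg (by rw [Fin.val_mk]; omega)]
  refine ⟨⟨⟨by simp only [backBeta]; nlinarith, by simp only [backBeta]; nlinarith⟩, ?_⟩,
    zStar_mem_Ioo hm hb0 hmb⟩
  simp only [backBeta, Nat.cast_zero, zero_div, zero_add]
  exact ⟨by positivity, (div_lt_div_iff_of_pos_right hm').2 hy₁⟩

theorem baker3_backBeta (hm : 0 < m) (hma : m * a < 1) (hmb : m * b < 1)
    {q : ℝ × ℝ × ℝ} (hq : q ∈ Ioo 0 1 ×ˢ Ioo 0 1 ×ˢ {zStar m b}) :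
    baker3 m a b (backBeta m a b q) = q := by
  obtain ⟨⟨hx₀, -⟩, ⟨hy₀, hy₁⟩, hz⟩ := hq
  have hm' : (1 : ℝ) ≤ m := by exact_mod_cast hm
  have hb1 : 1 - b ≠ 0 := by nlinarith
  have hx : ¬ (backBeta m a b q).1 < m * a := by simp only [backBeta]; nlinarith
  have hstrip : stripIndex m (backBeta m a b q).2.1 = 0 := by
    have hfloor : ⌊(m : ℝ) * (q.2.1 / m)⌋ = 0 := by
      rw [mul_div_cancel₀ _ (by positivity), Int.floor_eq_zero_iff]
      exact ⟨hy₀.le, hy₁⟩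
    simp only [stripIndex, backBeta, hfloor]
    omega
  simp only [baker3, baker2, bakerF, if_neg hx, hstrip]
  ext
  · simp only [backBeta]; field_simp [show (1 : ℝ) - m * a ≠ 0 by linarith]; ring
  · simp only [backBeta]; field_simp; simp
  · simp only [backBeta, zStar] at hz ⊢; rw [hz]; field_simp; ring

end InverseBranch

section Coding

variable {m : ℕ} {a b : ℝ}

theorem shift_mem_piImage {ω : ℤ → Letter m} (hω : ω ∈ piImage m a b) (j : ℤ) :
    (fun n => ω (n + j)) ∈ piImage m a b := by
  obtain ⟨-, o, -, ho, hmem⟩ := hω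
  exact ⟨o j, fun n => o (n + j), by simp, fun n => by simp only [add_right_comm n 1 j, ho],
    fun n => hmem (n + j)⟩

theorem exists_codes2_of_mem_piImage {ω : ℤ → Letter m} (hω : ω ∈ piImage m a b) :
    ∃ p, Codes2 m a p fun n : ℕ => ω n := by
  obtain ⟨-, o, -, ho, hmem⟩ := hω
  refine ⟨((o 0).1, (o 0).2.1), fun n => ?_⟩
  have hmem_n := hmem n
  have horbit : o n = (baker3 m a b)^[n] (o 0) := by
    simpa using apply_add_natCast_eq_iterate ho 0 n
  rw [interior_Omega3, horbit] at hmem_n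
  rw [← semiconj_baker3_baker2.iterate_right]
  exact hmem_n.1

theorem extendCoding_mem_piImage (hm : 2 ≤ m) (ha0 : 0 ≤ a) (hma : m * a < 1) (hb0 : 0 < b)
    (hmb : m * b < 1) {p : ℝ × ℝ} {σ : ℕ → Letter m} (hp : Codes2 m a p σ) :
    (fun n : ℤ => if 0 ≤ n then σ n.toNat else Sum.inr ⟨0, by omega⟩) ∈ piImage m a b := by
  set S : Set (ℝ × ℝ × ℝ) := Ioo 0 1 ×ˢ Ioo 0 1 ×ˢ {zStar m b}
  have hS : (p.1, p.2, zStar m b) ∈ S := ⟨(interior_Omega2_subset ha0 hma _ (hp 0)).1,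
    (interior_Omega2_subset ha0 hma _ (hp 0)).2, rfl⟩
  have hmaps : MapsTo (backBeta m a b) S S := mapsTo_backBeta (by omega) ha0 hma
  refine ⟨_, twoSidedOrbit (baker3 m a b) (backBeta m a b) (p.1, p.2, zStar m b), rfl,
    twoSidedOrbit_succ hmaps (fun q hq => baker3_backBeta (by omega) hma hmb hq) hS,
    fun n => ?_⟩
  by_cases hn : 0 ≤ n
  · simp only [twoSidedOrbit, if_pos hn]
    exact baker3_iterate_mem_interior (by omega) ha0 hma hb0 hmb hp (zStar_mem_Ioo hm hb0 hmb) _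
  · have hpred : (-n).toNat = (-(n + 1)).toNat + 1 := by omega
    simp only [twoSidedOrbit, if_neg hn, hpred, iterate_succ_apply']
    exact backBeta_mem_interior hm hma hb0 hmb (hmaps.iterate _ hS)

end Coding

/-- The two-sided heterochaos shift is the natural extension of
the one-sided one: `Σ_{HC} = {ω ∈ D^ℤ : (ω_n)_{n ≥ -k} ∈ Σ_{HC}⁺ for all k ≥ 1}`. -/
theorem sigmaHC_natural_extension (m : ℕ) (hm : 2 ≤ m) (a b : ℝ)
    (ha0 : 0 < a) (ha1 : a < 1 / m) (hb0 : 0 < b) (hb1 : b < 1 / m) :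
    SigmaHC m a b =
      {ω : ℤ → Letter m | ∀ k : ℕ, 1 ≤ k →
        (fun n : ℕ => ω ((n : ℤ) - (k : ℤ))) ∈ SigmaHCplus m a} := by
  have hm₀ : (0 : ℝ) < m := by positivity
  have hma : m * a < 1 := (lt_div_iff₀' hm₀).1 ha1
  have hmb : m * b < 1 := (lt_div_iff₀' hm₀).1 hb1
  apply Subset.antisymm
  · refine closure_minimal (fun ω hω k _ => subset_closure ?_)
      (isClosed_setOf_forall_shift_mem isClosed_closure)
    simp only [sub_eq_add_neg]
    exact exists_codes2_of_mem_piImage (shift_mem_piImage hω (-k))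
  intro ω hω
  refine mem_closure_iff_forall_finset_exists_eqOn.2 fun s => ?_
  set k := s.sup Int.natAbs + 1
  have hk : ∀ i ∈ s, 0 ≤ i + k := fun i hi => by
    have := Finset.le_sup (f := Int.natAbs) hi
    omega
  obtain ⟨σ, ⟨p, hp⟩, hσ⟩ := mem_closure_iff_forall_finset_exists_eqOn.1 (hω k (by omega))
    (s.image fun i : ℤ => (i + k).toNat)
  refine ⟨_, shift_mem_piImage (extendCoding_mem_piImage hm ha0.le hma hb0 hmb hp) k,
    fun i hi => ?_⟩
  rw [if_pos (hk i hi), hσ _ (Finset.mem_image_of_mem _ hi), Int.toNat_of_nonneg (hk i hi),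
    add_sub_cancel_right]
end

section
/- The one-sided heterochaos shift Σ_{HC}⁺ is isomorphic to the one-sided Dyck shift Σ_D⁺ via the symbol bijection κ(i) = α_i and κ(i+m) = β_i for i ∈ {1,...,m}; that is, the map (ω_n) ↦ (κ(ω_n)) is a homeomorphism from Σ_{HC}⁺ onto Σ_D⁺ commuting with the shifts. -/
/-- The symbol bijection `κ : {1,…,2m} → D`, `κ(i) = αᵢ`, `κ(i+m) = βᵢ`. -/
def kappa (m : ℕ) (i : Fin (2 * m)) : Letter m :=
  if h : (i : ℕ) < m then Sum.inl ⟨i, h⟩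
  else Sum.inr ⟨(i : ℕ) - m, by have := i.2; omega⟩

/-- The one-sided heterochaos shift on the symbols `{1,…,2m}` (as `Fin (2m)`):
the closure of the set of codings of points of `X_a` with respect to the
partition `Ω₁⁺,…,Ω_{2m}⁺` of `[0,1]²`. -/
noncomputable def SigmaHCplusF (m : ℕ) (a : ℝ) : Set (ℕ → Fin (2 * m)) :=
  closure {ω | ∃ p : ℝ × ℝ, ∀ n : ℕ,
    (baker2 m a)^[n] p ∈ interior (Omega2 m a (kappa m (ω n)))}

/-!
On the interiors of the partition the baker map is a skew product. The horizontal coordinate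
only follows a branch of the expanding map `F_a`, and every branch maps onto `(0,1)`, so any
finite horizontal itinerary can be realised and then continued along the fixed point of the
branch of `α₁`. The vertical coordinate is a stack written in base `m`: `αᵢ` pushes the digit
`i` (`y ↦ (i + y) / m`), and `βⱼ` is only allowed in the `j`-th horizontal strip, where it pops
the leading digit `j` (`y ↦ m y - j`). So a right bracket can only close the innermost pending
left bracket, and only if the types agree: every coding is a Dyck sequence. Conversely, started
from a stack holding its unmatched right brackets, a Dyck word never gets stuck, and padding it
with left brackets yields codings that agree with a given Dyck sequence on arbitrarily long
prefixes. Since the Dyck shift is closed, it is the closure of the codings, and `κ`, acting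
coordinatewise, is a homeomorphism of full shifts commuting with the shift.
-/

namespace Heterochaos

open Set Filter Topology

variable {m : ℕ} {a : ℝ}

def orbitAlong {α β : Type*} (f : α → β → β) (c : ℕ → α) (x : β) : ℕ → β
  | 0 => x
  | n + 1 => f (c n) (orbitAlong f c x n)

theorem orbitAlong_add {α β : Type*} (f : α → β → β) (c : ℕ → α) (x : β) (i n : ℕ) :
    orbitAlong f c x (i + n) = orbitAlong f (fun k => c (i + k)) (orbitAlong f c x i) n := by
  induction n with
  | zero => rfl
  | succ n ih => rw [← add_assoc, orbitAlong, ih, orbitAlong]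

theorem wordAtN_add (ω : ℕ → Letter m) (i n k : ℕ) :
    wordAtN ω i (n + k) = wordAtN ω i n ++ wordAtN ω (i + n) k := by
  simp [wordAtN, List.ofFn_add, add_assoc]

theorem wordAtN_succ (ω : ℕ → Letter m) (i n : ℕ) :
    wordAtN ω i (n + 1) = wordAtN ω i n ++ [ω (i + n)] := by
  rw [wordAtN_add]
  simp [wordAtN]

theorem red_append_singleton (w : List (Letter m)) (c : Letter m) :
    red (w ++ [c]) = dyckStep m (red w) c := by
  simp [red, List.foldl_append]

/-- For a reduced word stored reversed (as produced by `red`), the indices of its unmatched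
left brackets, innermost first. -/
def openIdx : List (Letter m) → List (Fin m)
  | Sum.inl i :: t => i :: openIdx t
  | _ => []

/-- For a reduced word stored reversed, the indices of its unmatched right brackets, in the
order in which they are read. -/
def closeIdx (s : List (Letter m)) : List (Fin m) :=
  (s.filterMap Sum.getRight?).reverse

@[simp] theorem openIdx_inl (i : Fin m) (t : List (Letter m)) :
    openIdx (Sum.inl i :: t) = i :: openIdx t := rfl

@[simp] theorem closeIdx_inl (i : Fin m) (t : List (Letter m)) :
    closeIdx (Sum.inl i :: t) = closeIdx t := rfl

@[simp] theorem closeIdx_inr (j : Fin m) (t : List (Letter m)) :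
    closeIdx (Sum.inr j :: t) = closeIdx t ++ [j] := by
  simp [closeIdx, Sum.getRight?]

def stackStep : Option (List (Fin m)) → Letter m → Option (List (Fin m))
  | some st, Sum.inl i => some (i :: st)
  | some (i :: st), Sum.inr j => if i = j then some st else none
  | _, _ => none

def stackRun (w : List (Letter m)) (st : List (Fin m)) : Option (List (Fin m)) :=
  w.foldl stackStep (some st)

theorem stackRun_append_singleton (w : List (Letter m)) (c : Letter m) (st : List (Fin m)) :
    stackRun (w ++ [c]) st = stackStep (stackRun w st) c := by
  simp [stackRun, List.foldl_append]

theorem stackRun_append (u v : List (Letter m)) (st : List (Fin m)) :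
    stackRun (u ++ v) st = (stackRun u st).bind (stackRun v) := by
  induction v using List.reverseRecOn with
  | nil =>
    rw [List.append_nil]
    exact (Option.bind_fun_some _).symm
  | append_singleton v c ih =>
    rw [← List.append_assoc, stackRun_append_singleton, ih]
    cases stackRun u st <;> simp [stackRun_append_singleton, stackStep]

theorem stackRun_ne_none_of_append {u v : List (Letter m)} {st : List (Fin m)}
    (h : stackRun (u ++ v) st ≠ none) : stackRun u st ≠ none := by
  rw [stackRun_append] at h
  intro hu
  simp [hu] at h

theorem stackRun_ne_none_of_forall_isLeft {w : List (Letter m)} (hw : ∀ c ∈ w, c.isLeft)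
    (st : List (Fin m)) : stackRun w st ≠ none := by
  induction w using List.reverseRecOn with
  | nil => simp [stackRun]
  | append_singleton w c ih =>
    obtain ⟨i, rfl⟩ := Sum.isLeft_iff.mp (hw c (by simp))
    obtain ⟨st', hst'⟩ := Option.ne_none_iff_exists'.mp (ih fun c hc => hw c (by simp [hc]))
    simp [stackRun_append_singleton, hst', stackStep]

theorem stackRun_of_red {w : List (Letter m)} {s : List (Letter m)} (hs : red w = some s)
    (B : List (Fin m)) : stackRun w (closeIdx s ++ B) = some (openIdx s ++ B) := by
  induction w using List.reverseRecOn generalizing s B with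
  | nil =>
    obtain rfl : s = [] := by simpa [red] using hs.symm
    rfl
  | append_singleton w c ih =>
    obtain ⟨s₀, hs₀⟩ : ∃ s₀, red w = some s₀ := Option.ne_none_iff_exists'.mp fun h => by
      rw [red_append_singleton, h] at hs
      simp [dyckStep] at hs
    rw [red_append_singleton, hs₀] at hs
    rw [stackRun_append_singleton]
    rcases c with i | j
    · obtain rfl : s = Sum.inl i :: s₀ := by simpa [dyckStep] using hs.symm
      rw [closeIdx_inl, ih hs₀]
      rfl
    · rcases s₀ with _ | ⟨i | i, t⟩
      · obtain rfl : s = [Sum.inr j] := by simpa [dyckStep] using hs.symm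
        rw [closeIdx_inr, List.append_assoc, List.singleton_append, ih hs₀]
        simp [stackStep, openIdx]
      · by_cases hij : i = j
        · obtain rfl : s = t := by simpa [dyckStep, hij] using hs.symm
          rw [← closeIdx_inl i, ih hs₀]
          simp [stackStep, hij]
        · simp [dyckStep, hij] at hs
      · obtain rfl : s = Sum.inr j :: Sum.inr i :: t := by simpa [dyckStep] using hs.symm
        rw [closeIdx_inr, List.append_assoc, List.singleton_append, ih hs₀]
        simp [stackStep, openIdx]

/-- The vertical coordinate stores a stack of pending left brackets as its leading base-`m`
digits `d`, above a tail `r`. -/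
noncomputable def stackCoord (d : List (Fin m)) (r : ℝ) : ℝ :=
  d.foldr (fun (i : Fin m) y => ((i : ℝ) + y) / m) r

noncomputable def yBranch (m : ℕ) : Letter m → ℝ → ℝ
  | Sum.inl i, y => ((i : ℝ) + y) / m
  | Sum.inr j, y => m * y - j

def yDomain (m : ℕ) : Letter m → Set ℝ
  | Sum.inl _ => Ioo 0 1
  | Sum.inr j => Ioo ((j : ℝ) / m) ((j + 1) / m)

def YCodes (m : ℕ) (y : ℝ) (c : ℕ → Letter m) : Prop :=
  ∀ n, orbitAlong (yBranch m) c y n ∈ yDomain m (c n)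

@[simp] theorem stackCoord_cons (i : Fin m) (d : List (Fin m)) (r : ℝ) :
    stackCoord (i :: d) r = ((i : ℝ) + stackCoord d r) / m := rfl

theorem cast_val_add_one_le (i : Fin m) : (i : ℝ) + 1 ≤ m := by
  exact_mod_cast i.2

theorem stackCoord_mem_Ioo {r : ℝ} (hr : r ∈ Ioo 0 1) (d : List (Fin m)) :
    stackCoord d r ∈ Ioo 0 1 := by
  induction d with
  | nil => exact hr
  | cons i d ih =>
    have hi : (i : ℝ) + 1 ≤ m := cast_val_add_one_le i
    have hi₀ : (0 : ℝ) ≤ i := by positivity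
    have hm : (0 : ℝ) < m := Nat.cast_pos.2 i.pos
    rw [stackCoord_cons, mem_Ioo, lt_div_iff₀ hm, div_lt_iff₀ hm]
    constructor <;> linarith [ih.1, ih.2]

theorem stackCoord_cons_mem_yDomain {r : ℝ} (hr : r ∈ Ioo 0 1) (j : Fin m) (d : List (Fin m)) :
    stackCoord (j :: d) r ∈ yDomain m (Sum.inr j) := by
  have hd := stackCoord_mem_Ioo hr d
  have hm : (0 : ℝ) < m := Nat.cast_pos.2 j.pos
  rw [stackCoord_cons]
  exact ⟨div_lt_div_of_pos_right (by linarith [hd.1]) hm,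
    div_lt_div_of_pos_right (by linarith [hd.2]) hm⟩

theorem yDomain_subset_Ioo (c : Letter m) : yDomain m c ⊆ Ioo 0 1 := by
  rcases c with _ | j
  · exact subset_rfl
  · have hj : (j : ℝ) + 1 ≤ m := cast_val_add_one_le j
    have hm : (0 : ℝ) < m := Nat.cast_pos.2 j.pos
    refine Ioo_subset_Ioo (by positivity) ?_
    rwa [div_le_one hm]

theorem floor_mul_eq_of_mem_yDomain {j : Fin m} {y : ℝ} (hy : y ∈ yDomain m (Sum.inr j)) :
    ⌊(m : ℝ) * y⌋ = (j : ℕ) := by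
  have hm : (0 : ℝ) < m := Nat.cast_pos.2 j.pos
  obtain ⟨h₁, h₂⟩ := hy
  rw [div_lt_iff₀ hm] at h₁
  rw [lt_div_iff₀ hm] at h₂
  rw [Int.floor_eq_iff]
  push_cast
  constructor <;> linarith

theorem eq_of_mem_yDomain_inr {i j : Fin m} {y : ℝ} (hi : y ∈ yDomain m (Sum.inr i))
    (hj : y ∈ yDomain m (Sum.inr j)) : i = j := by
  have := (floor_mul_eq_of_mem_yDomain hi).symm.trans (floor_mul_eq_of_mem_yDomain hj)
  exact Fin.ext (by exact_mod_cast this)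

theorem yBranch_stackCoord_cons (j : Fin m) (d : List (Fin m)) (r : ℝ) :
    yBranch m (Sum.inr j) (stackCoord (j :: d) r) = stackCoord d r := by
  have hm : (m : ℝ) ≠ 0 := (Nat.cast_pos.2 j.pos).ne'
  simp only [yBranch, stackCoord_cons]
  field_simp
  ring

theorem yBranch_stackCoord_of_stackStep {r : ℝ} (hr : r ∈ Ioo 0 1) {st st' : List (Fin m)}
    {c : Letter m} (h : stackStep (some st) c = some st') :
    stackCoord st r ∈ yDomain m c ∧ yBranch m c (stackCoord st r) = stackCoord st' r := by
  rcases c with i | j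
  · obtain rfl : st' = i :: st := by simpa [stackStep] using h.symm
    exact ⟨stackCoord_mem_Ioo hr st, rfl⟩
  · rcases st with _ | ⟨i, st⟩
    · simp [stackStep] at h
    · by_cases hij : i = j
      · obtain rfl : st' = st := by simpa [stackStep, hij] using h.symm
        subst hij
        exact ⟨stackCoord_cons_mem_yDomain hr i _, yBranch_stackCoord_cons i _ r⟩
      · simp [stackStep, hij] at h

theorem yCodes_stackCoord {c : ℕ → Letter m} {st : List (Fin m)} {r : ℝ} (hr : r ∈ Ioo 0 1)
    (h : ∀ n, stackRun (wordAtN c 0 n) st ≠ none) : YCodes m (stackCoord st r) c := by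
  have hnext : ∀ n st', stackRun (wordAtN c 0 n) st = some st' →
      ∃ st'', stackStep (some st') (c n) = some st'' ∧
        stackRun (wordAtN c 0 (n + 1)) st = some st'' := by
    intro n st' hrun
    have hsucc := h (n + 1)
    rw [wordAtN_succ, stackRun_append_singleton, hrun, zero_add] at hsucc ⊢
    obtain ⟨st'', hst''⟩ := Option.ne_none_iff_exists'.mp hsucc
    exact ⟨st'', hst'', hst''⟩
  have horbit : ∀ n, ∃ st', stackRun (wordAtN c 0 n) st = some st' ∧
      orbitAlong (yBranch m) c (stackCoord st r) n = stackCoord st' r := by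
    intro n
    induction n with
    | zero => exact ⟨st, rfl, rfl⟩
    | succ n ih =>
      obtain ⟨st', hrun, horb⟩ := ih
      obtain ⟨st'', hstep, hrun'⟩ := hnext n st' hrun
      exact ⟨st'', hrun', by rw [orbitAlong, horb, (yBranch_stackCoord_of_stackStep hr hstep).2]⟩
  intro n
  obtain ⟨st', hrun, horb⟩ := horbit n
  obtain ⟨st'', hstep, -⟩ := hnext n st' hrun
  rw [horb]
  exact (yBranch_stackCoord_of_stackStep hr hstep).1

theorem yBranch_mem_Ioo {c : Letter m} {y : ℝ} (hy : y ∈ yDomain m c) :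
    yBranch m c y ∈ Ioo 0 1 := by
  rcases c with i | j
  · exact stackCoord_mem_Ioo hy [i]
  · have hm : (0 : ℝ) < m := Nat.cast_pos.2 j.pos
    obtain ⟨h₁, h₂⟩ := hy
    rw [div_lt_iff₀ hm] at h₁
    rw [lt_div_iff₀ hm] at h₂
    constructor <;> simp only [yBranch] <;> linarith

/-- Invariant: the digits of the vertical coordinate above some tail are the pending left
brackets of the word read so far, so a right bracket can only close the innermost one. -/
theorem dyckStep_of_mem_yDomain {s : List (Letter m)} {r : ℝ} (hr : r ∈ Ioo 0 1) {c : Letter m}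
    (hc : stackCoord (openIdx s) r ∈ yDomain m c) :
    ∃ s' r', dyckStep m (some s) c = some s' ∧ r' ∈ Ioo 0 1 ∧
      yBranch m c (stackCoord (openIdx s) r) = stackCoord (openIdx s') r' := by
  rcases c with i | j
  · exact ⟨Sum.inl i :: s, r, rfl, hr, rfl⟩
  · rcases s with _ | ⟨i | i, t⟩
    · exact ⟨[Sum.inr j], _, rfl, yBranch_mem_Ioo hc, rfl⟩
    · obtain rfl : i = j := eq_of_mem_yDomain_inr (stackCoord_cons_mem_yDomain hr i _) hc
      exact ⟨t, r, by simp [dyckStep], hr, yBranch_stackCoord_cons i _ r⟩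
    · exact ⟨Sum.inr j :: Sum.inr i :: t, _, rfl, yBranch_mem_Ioo hc, rfl⟩

theorem red_wordAtN_of_yCodes {y : ℝ} {c : ℕ → Letter m} (h : YCodes m y c) (n : ℕ) :
    ∃ s r, red (wordAtN c 0 n) = some s ∧ r ∈ Ioo 0 1 ∧
      orbitAlong (yBranch m) c y n = stackCoord (openIdx s) r := by
  induction n with
  | zero => exact ⟨[], y, rfl, yDomain_subset_Ioo _ (h 0), rfl⟩
  | succ n ih =>
    obtain ⟨s, r, hs, hr, horb⟩ := ih
    have hn := h n
    rw [horb] at hn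
    obtain ⟨s', r', hs', hr', hy⟩ := dyckStep_of_mem_yDomain hr hn
    refine ⟨s', r', ?_, hr', ?_⟩
    · rw [wordAtN_succ, red_append_singleton, hs, zero_add, hs']
    · rw [orbitAlong, horb, hy]

theorem dyckSeqPlus_of_yCodes {y : ℝ} {c : ℕ → Letter m} (h : YCodes m y c) :
    DyckSeqPlus c := by
  intro i n
  have hshift : YCodes m (orbitAlong (yBranch m) c y i) (fun k => c (i + k)) := fun k => by
    rw [← orbitAlong_add]
    exact h (i + k)
  obtain ⟨s, -, hs, -⟩ := red_wordAtN_of_yCodes hshift n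
  have hword : wordAtN c i n = wordAtN (fun k => c (i + k)) 0 n := by simp [wordAtN]
  rw [DyckAdmissible, hword, hs]
  exact Option.some_ne_none s

noncomputable def xBranch (m : ℕ) (a : ℝ) : Letter m → ℝ → ℝ
  | Sum.inl i, x => x / a - i
  | Sum.inr _, x => (x - m * a) / (1 - m * a)

def xDomain (m : ℕ) (a : ℝ) : Letter m → Set ℝ
  | Sum.inl i => Ioo ((i : ℝ) * a) ((i + 1) * a)
  | Sum.inr _ => Ioo ((m : ℝ) * a) 1

noncomputable def xSection (m : ℕ) (a : ℝ) : Letter m → ℝ → ℝ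
  | Sum.inl i, x => a * (i + x)
  | Sum.inr _, x => m * a + (1 - m * a) * x

def XCodes (m : ℕ) (a x : ℝ) (c : ℕ → Letter m) : Prop :=
  ∀ n, orbitAlong (xBranch m a) c x n ∈ xDomain m a (c n)

theorem xDomain_subset_Ioo (ha : 0 < a) (ham : m * a < 1) (c : Letter m) :
    xDomain m a c ⊆ Ioo 0 1 := by
  rcases c with i | _
  · have hi : (i : ℝ) + 1 ≤ m := cast_val_add_one_le i
    exact Ioo_subset_Ioo (by positivity) (by nlinarith)
  · exact Ioo_subset_Ioo_left (by positivity)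

theorem xSection_mem_xDomain (ha : 0 < a) (ham : m * a < 1) (c : Letter m) {x : ℝ}
    (hx : x ∈ Ioo 0 1) : xSection m a c x ∈ xDomain m a c := by
  obtain ⟨h₀, h₁⟩ := hx
  rcases c with i | _ <;> constructor <;> simp only [xSection] <;> nlinarith

theorem xBranch_xSection (ha : 0 < a) (ham : m * a < 1) (c : Letter m) (x : ℝ) :
    xBranch m a c (xSection m a c x) = x := by
  rcases c with i | _
  · simp only [xBranch, xSection]
    field_simp
    ring
  · have : (1 : ℝ) - m * a ≠ 0 := by linarith
    simp only [xBranch, xSection]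
    field_simp
    ring

theorem xCodes_xSection (ha : 0 < a) (ham : m * a < 1) {c : ℕ → Letter m} {x : ℝ}
    (h : XCodes m a x (fun n => c (1 + n))) : XCodes m a (xSection m a (c 0) x) c := by
  rintro (_ | n)
  · exact xSection_mem_xDomain ha ham (c 0) (xDomain_subset_Ioo ha ham _ (h 0))
  · rw [add_comm, orbitAlong_add, orbitAlong, orbitAlong, xBranch_xSection ha ham]
    exact h n

theorem exists_xCodes_of_shift (ha : 0 < a) (ham : m * a < 1) {c : ℕ → Letter m} {k : ℕ}
    (h : ∃ x, XCodes m a x (fun n => c (k + n))) : ∃ x, XCodes m a x c := by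
  induction k generalizing c with
  | zero => simpa using h
  | succ k ih =>
    obtain ⟨x, hx⟩ := h
    exact ih ⟨_, xCodes_xSection ha ham (c := fun n => c (k + n))
      (by simpa only [add_assoc] using hx)⟩

theorem orbitAlong_const_of_fixed {α β : Type*} {f : α → β → β} {c : α} {x : β}
    (hx : f c x = x) (n : ℕ) : orbitAlong f (fun _ => c) x n = x := by
  induction n with
  | zero => rfl
  | succ n ih => rw [orbitAlong, ih, hx]

/-- For `i = 0` the fixed point `0` would lie on the boundary of the domain. -/
theorem xCodes_const_inl (ha : 0 < a) (ham : m * a < 1) (i : Fin m) (hi : 0 < (i : ℕ)) :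
    XCodes m a (i * a / (1 - a)) (fun _ => Sum.inl i) := by
  have hi' : (1 : ℝ) ≤ i := by exact_mod_cast hi
  have hm : (i : ℝ) + 1 ≤ m := cast_val_add_one_le i
  have ha1 : 0 < 1 - a := by nlinarith
  have hfix : xBranch m a (Sum.inl i) (i * a / (1 - a)) = i * a / (1 - a) := by
    simp only [xBranch]
    field_simp
    ring
  intro n
  rw [orbitAlong_const_of_fixed hfix]
  constructor
  · rw [lt_div_iff₀ ha1]
    nlinarith [mul_pos (by linarith : (0 : ℝ) < i) (mul_pos ha ha)]
  · rw [div_lt_iff₀ ha1]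
    nlinarith [mul_pos ha (by nlinarith : (0 : ℝ) < 1 - (i + 1) * a)]

theorem interior_Omega2 (c : Letter m) :
    interior (Omega2 m a c) = xDomain m a c ×ˢ yDomain m c := by
  rcases c with i | j
  · simp [Omega2, interior_prod_eq, xDomain, yDomain]
  · have hm : (0 : ℝ) < m := Nat.cast_pos.2 j.pos
    rw [Omega2, interior_prod_eq, interior_Icc]
    split_ifs with h
    · have hj : (j : ℝ) + 1 = m := by exact_mod_cast (show (j : ℕ) + 1 = m by omega)
      simp [xDomain, yDomain, hj, hm.ne']
    · simp [xDomain, yDomain]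

theorem baker2_of_mem_interior (ha : 0 < a) {c : Letter m} {p : ℝ × ℝ}
    (hp : p ∈ interior (Omega2 m a c)) : baker2 m a p = (xBranch m a c p.1, yBranch m c p.2) := by
  rw [interior_Omega2] at hp
  rcases c with i | j <;> obtain ⟨⟨hx₁, hx₂⟩, hy⟩ := hp
  · have hm : (i : ℝ) + 1 ≤ m := cast_val_add_one_le i
    have hlt : p.1 < m * a := hx₂.trans_le (by nlinarith)
    have hfloor : ⌊p.1 / a⌋ = (i : ℕ) := by
      rw [Int.floor_eq_iff, le_div_iff₀ ha, div_lt_iff₀ ha]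
      push_cast
      constructor <;> linarith
    have hm₀ : (m : ℝ) ≠ 0 := (Nat.cast_pos.2 i.pos).ne'
    simp only [baker2, bakerF, if_pos hlt, Int.fract, hfloor, xBranch, yBranch]
    push_cast
    congr 1
    field_simp
    ring
  · have hnlt : ¬ p.1 < m * a := not_lt.mpr hx₁.le
    have hstrip : stripIndex m p.2 = (j : ℕ) := by
      rw [stripIndex, floor_mul_eq_of_mem_yDomain hy, min_eq_left (by omega)]
    simp only [baker2, bakerF, if_neg hnlt, hstrip, xBranch, yBranch]
    push_cast
    rfl

theorem codes2_iff (ha : 0 < a) {p : ℝ × ℝ} {c : ℕ → Letter m} :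
    Codes2 m a p c ↔ XCodes m a p.1 c ∧ YCodes m p.2 c := by
  have hiter : ∀ n, (∀ k < n, (baker2 m a)^[k] p ∈ interior (Omega2 m a (c k))) →
      (baker2 m a)^[n] p = (orbitAlong (xBranch m a) c p.1 n, orbitAlong (yBranch m) c p.2 n) := by
    intro n
    induction n with
    | zero => intro _; rfl
    | succ n ih =>
      intro h
      have hn := h n n.lt_succ_self
      rw [ih fun k hk => h k (by omega)] at hn
      rw [Function.iterate_succ_apply', ih fun k hk => h k (by omega),
        baker2_of_mem_interior ha hn]
      rfl
  constructor
  · intro h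
    have hmem : ∀ n, (orbitAlong (xBranch m a) c p.1 n, orbitAlong (yBranch m) c p.2 n) ∈
        xDomain m a (c n) ×ˢ yDomain m (c n) := fun n => by
      rw [← interior_Omega2, ← hiter n fun k _ => h k]
      exact h n
    exact ⟨fun n => (hmem n).1, fun n => (hmem n).2⟩
  · rintro ⟨hx, hy⟩ n
    induction n using Nat.strong_induction_on with
    | _ n ih =>
      rw [hiter n ih, interior_Omega2]
      exact ⟨hx n, hy n⟩

def padFrom {α : Type*} (ω : ℕ → α) (k : ℕ) (c : α) : ℕ → α :=
  fun n => if n < k then ω n else c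

theorem tendsto_padFrom {α : Type*} [TopologicalSpace α] (ω : ℕ → α) (c : α) :
    Tendsto (fun k => padFrom ω k c) atTop (𝓝 ω) := by
  refine tendsto_pi_nhds.2 fun n => tendsto_const_nhds.congr' ?_
  filter_upwards [eventually_gt_atTop n] with k hk
  simp [padFrom, hk]

theorem exists_yCodes_padFrom {ω : ℕ → Letter m} {k : ℕ} (hω : DyckAdmissible (wordAtN ω 0 k))
    (i : Fin m) : ∃ y, YCodes m y (padFrom ω k (Sum.inl i)) := by
  obtain ⟨s, hs⟩ := Option.ne_none_iff_exists'.mp hω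
  refine ⟨stackCoord (closeIdx s) (1 / 2), yCodes_stackCoord (by norm_num) fun n => ?_⟩
  have hprefix : wordAtN (padFrom ω k (Sum.inl i)) 0 k = wordAtN ω 0 k := by
    simp [wordAtN, padFrom]
  have hrun : stackRun (wordAtN ω 0 k) (closeIdx s) = some (openIdx s) := by
    simpa using stackRun_of_red hs []
  apply stackRun_ne_none_of_append (v := wordAtN (padFrom ω k (Sum.inl i)) (0 + n) k)
  rw [← wordAtN_add, add_comm, wordAtN_add, hprefix, stackRun_append, hrun, Option.bind_some]
  exact stackRun_ne_none_of_forall_isLeft (by simp [wordAtN, padFrom]) _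

theorem isClosed_setOf_dyckSeqPlus : IsClosed {ω : ℕ → Letter m | DyckSeqPlus ω} := by
  have h : {ω : ℕ → Letter m | DyckSeqPlus ω} = ⋂ (i : ℕ) (n : ℕ),
      (fun (ω : ℕ → Letter m) (k : Fin n) => ω (i + k)) ⁻¹'
        {g : Fin n → Letter m | DyckAdmissible (List.ofFn g)} := by
    ext ω
    simp only [mem_iInter, mem_preimage, mem_ofPred_eq]
    rfl
  rw [h]
  exact isClosed_iInter fun i => isClosed_iInter fun n =>
    (isClosed_discrete _).preimage (continuous_pi fun k => continuous_apply _)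

theorem closure_setOf_codes2 (hm : 1 < m) (ha : 0 < a) (ham : m * a < 1) :
    closure {c | ∃ p, Codes2 m a p c} = {ω : ℕ → Letter m | DyckSeqPlus ω} := by
  refine subset_antisymm (closure_minimal ?_ isClosed_setOf_dyckSeqPlus) fun ω hω => ?_
  · rintro c ⟨p, hp⟩
    exact dyckSeqPlus_of_yCodes ((codes2_iff ha).1 hp).2
  · refine mem_closure_of_tendsto (tendsto_padFrom ω (Sum.inl ⟨1, hm⟩))
      (Eventually.of_forall fun k => ?_)
    obtain ⟨x, hx⟩ := exists_xCodes_of_shift ha ham (c := padFrom ω k (Sum.inl ⟨1, hm⟩)) (k := k)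
      ⟨_, by simpa [padFrom] using xCodes_const_inl ha ham ⟨1, hm⟩ one_pos⟩
    obtain ⟨y, hy⟩ := exists_yCodes_padFrom (hω 0 k) ⟨1, hm⟩
    exact ⟨(x, y), (codes2_iff ha).2 ⟨hx, hy⟩⟩

def kappaEquiv (m : ℕ) : Fin (2 * m) ≃ Letter m :=
  (finCongr (two_mul m)).trans finSumFinEquiv.symm

theorem coe_kappaEquiv : ⇑(kappaEquiv m) = kappa m := by
  funext i
  rw [kappaEquiv, Equiv.trans_apply, Equiv.symm_apply_eq, kappa]
  split_ifs with h
  · ext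
    simp
  · ext
    simp only [finCongr_apply, Fin.val_cast, finSumFinEquiv_apply_right, Fin.natAdd_eq_addNat,
      Fin.addNat_mk]
    omega

end Heterochaos

open Heterochaos

/-- The coordinatewise extension of `κ` is a homeomorphism of
the full shifts which maps `Σ_{HC}⁺` onto `Σ_D⁺` and commutes with the shifts;
in particular `Σ_{HC}⁺` and `Σ_D⁺` are isomorphic subshifts. -/
theorem heterochaos_iso_dyck (m : ℕ) (hm : 2 ≤ m) (a : ℝ)
    (ha0 : 0 < a) (ha1 : a < 1 / m) :
    ∃ h : (ℕ → Fin (2 * m)) ≃ₜ (ℕ → Letter m),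
      (∀ (ω : ℕ → Fin (2 * m)) (n : ℕ), h ω n = kappa m (ω n)) ∧
      h '' SigmaHCplusF m a = {ω | DyckSeqPlus ω} ∧
      ∀ ω : ℕ → Fin (2 * m), h (fun n => ω (n + 1)) = fun n => h ω (n + 1) := by
  have ham : (m : ℝ) * a < 1 := by
    rwa [lt_div_iff₀ (by exact_mod_cast (by omega : 0 < m)), mul_comm] at ha1
  let h := Homeomorph.piCongrRight fun _ : ℕ => (kappaEquiv m).toHomeomorphOfDiscrete
  have hpre : {ω | ∃ p : ℝ × ℝ, ∀ n : ℕ,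
      (baker2 m a)^[n] p ∈ interior (Omega2 m a (kappa m (ω n)))} =
      h ⁻¹' {c | ∃ p, Codes2 m a p c} := by
    simp only [← coe_kappaEquiv]
    rfl
  refine ⟨h, fun ω n => congrFun coe_kappaEquiv (ω n), ?_, fun ω => rfl⟩
  rw [SigmaHCplusF, Homeomorph.image_closure, hpre, h.image_preimage,
    closure_setOf_codes2 hm ha0 ham]
end

section
/- If ω belongs to the set A = {ω ∈ Σ_D : liminf_{i→∞} H_i(ω) = −∞ or liminf_{i→−∞} H_i(ω) = −∞}, then the fiber π̄^{−1}(ω) of the coding map of the 3-dimensional heterochaos baker map contains at most one point; consequently the restriction of π̄ to π̄^{−1}(A) is a homeomorphism onto its image. -/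
/-- The sign of a letter: `+1` for a left bracket, `-1` for a right bracket. -/
def lsign {m : ℕ} : Letter m → ℤ := Sum.elim (fun _ => 1) (fun _ => -1)

/-- The height function `H_i(ω)`: the excess of left brackets over right
brackets between positions `0` and `i`, with the paper's sign convention
for negative `i`. -/
def Hfun {m : ℕ} (ω : ℤ → Letter m) (i : ℤ) : ℤ :=
  if 0 ≤ i then ∑ k ∈ Finset.range i.toNat, lsign (ω k)
  else -∑ k ∈ Finset.range (-i).toNat, lsign (ω (i + k))

/-- Membership in the set `A ⊂ Σ_D`:
`liminf_{i→∞} H_i(ω) = -∞` or `liminf_{i→-∞} H_i(ω) = -∞`. -/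
def inA {m : ℕ} (ω : ℤ → Letter m) : Prop :=
  (∀ C : ℤ, ∃ᶠ i : ℤ in Filter.atTop, Hfun ω i < C) ∨
  (∀ C : ℤ, ∃ᶠ i : ℤ in Filter.atBot, Hfun ω i < C)

open Set Filter

lemma Letter.pos {m : ℕ} (γ : Letter m) : 0 < m := γ.elim Fin.pos Fin.pos

/-- The length of the `x`-interval of `Ω_γ`, i.e. the inverse of the slope of `F_a` on it. -/
def xScale (m : ℕ) (a : ℝ) : Letter m → ℝ := Sum.elim (fun _ => a) (fun _ => 1 - m * a)

/-- The contraction factor of `f_{a,b}` in the `z`-direction on `Ω_γ`. -/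
def zScale (m : ℕ) (b : ℝ) : Letter m → ℝ := Sum.elim (fun _ => 1 - m * b) (fun _ => b)

section Domains

variable {m : ℕ} {a b : ℝ} {γ : Letter m} {p q : ℝ × ℝ × ℝ}

lemma stripIndex_eq_of_mem {j : Fin m} {y : ℝ}
    (hy : y ∈ (if (j : ℕ) = m - 1 then Icc ((j : ℝ) / m) 1
      else Ico ((j : ℝ) / m) (((j : ℝ) + 1) / m))) :
    stripIndex m y = j := by
  have hm : (0 : ℝ) < m := by exact_mod_cast j.pos
  have hjm := j.isLt
  have hjy : (j : ℤ) ≤ ⌊(m : ℝ) * y⌋ := by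
    have : (j : ℝ) / m ≤ y := by split_ifs at hy <;> exact hy.1
    rw [div_le_iff₀' hm] at this
    exact Int.le_floor.2 (by exact_mod_cast this)
  unfold stripIndex
  split_ifs at hy with hj
  · omega
  · have : ⌊(m : ℝ) * y⌋ < j + 1 :=
      Int.floor_lt.2 (by push_cast; exact (lt_div_iff₀' hm).1 hy.2)
    omega

lemma baker3_of_mem_Omega3_inl (ha : 0 < a) {i : Fin m}
    (hp : p ∈ Omega3 m a (Sum.inl i)) :
    baker3 m a b p = ((p.1 - i * a) / a, (p.2.1 + i) / m, (1 - m * b) * p.2.2) := by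
  obtain ⟨⟨⟨hx0, hx1⟩, -⟩, -⟩ := hp
  have hfloor : ⌊p.1 / a⌋ = i := by
    rw [Int.floor_eq_iff]
    push_cast
    exact ⟨(le_div_iff₀ ha).2 hx0, (div_lt_iff₀ ha).2 hx1⟩
  have hx : p.1 < m * a :=
    hx1.trans_le (mul_le_mul_of_nonneg_right (by exact_mod_cast i.isLt) ha.le)
  simp only [baker3, baker2, bakerF, hx, if_true, Int.fract, hfloor, Int.cast_natCast]
  ext <;> field_simp

lemma baker3_of_mem_Omega3_inr {j : Fin m}
    (hp : p ∈ Omega3 m a (Sum.inr j)) :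
    baker3 m a b p =
      ((p.1 - m * a) / (1 - m * a), m * p.2.1 - j, b * p.2.2 + 1 - m * b + b * j) := by
  obtain ⟨⟨⟨hx, -⟩, hy⟩, -⟩ := hp
  simp only [baker3, baker2, bakerF, not_lt.2 hx, if_false, stripIndex_eq_of_mem hy,
    Int.cast_natCast]

lemma xScale_pos (ha : 0 < a) (hma : m * a < 1) : 0 < xScale m a γ := by
  cases γ <;> simp only [xScale, Sum.elim_inl, Sum.elim_inr] <;> linarith

lemma xScale_le_max : xScale m a γ ≤ max a (1 - m * a) := by
  cases γ
  exacts [le_max_left _ _, le_max_right _ _]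

lemma zScale_pos (hb : 0 < b) (hmb : m * b < 1) : 0 < zScale m b γ := by
  cases γ <;> simp only [zScale, Sum.elim_inl, Sum.elim_inr] <;> linarith

lemma zScale_le_max : zScale m b γ ≤ max b (1 - m * b) := by
  cases γ
  exacts [le_max_right _ _, le_max_left _ _]

lemma mem_unitCube_of_mem_Omega3 (ha : 0 ≤ a) (hma : m * a ≤ 1) (hp : p ∈ Omega3 m a γ) :
    p.1 ∈ Icc (0 : ℝ) 1 ∧ p.2.1 ∈ Icc (0 : ℝ) 1 ∧ p.2.2 ∈ Icc (0 : ℝ) 1 := by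
  obtain ⟨hxy, hz⟩ := hp
  cases γ with
  | inl i =>
    obtain ⟨⟨hx0, hx1⟩, hy⟩ := hxy
    have him : (i + 1 : ℝ) * a ≤ m * a :=
      mul_le_mul_of_nonneg_right (by exact_mod_cast i.isLt) ha
    exact ⟨⟨(by positivity : (0 : ℝ) ≤ i * a).trans hx0, by linarith⟩, hy, hz⟩
  | inr j =>
    obtain ⟨⟨hx0, hx1⟩, hy⟩ := hxy
    have hm : (0 : ℝ) < m := by exact_mod_cast j.pos
    have hj1 : ((j : ℝ) + 1) / m ≤ 1 := (div_le_one hm).2 (by exact_mod_cast j.isLt)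
    have hj0 : (0 : ℝ) ≤ j / m := by positivity
    refine ⟨⟨(by positivity : (0 : ℝ) ≤ m * a).trans hx0, hx1⟩, ?_, hz⟩
    split_ifs at hy
    exacts [⟨hj0.trans hy.1, hy.2⟩, ⟨hj0.trans hy.1, hy.2.le.trans hj1⟩]

lemma sub_fst_eq_xScale_mul (ha : 0 < a) (hma : m * a < 1)
    (hp : p ∈ Omega3 m a γ) (hq : q ∈ Omega3 m a γ) :
    p.1 - q.1 = xScale m a γ * ((baker3 m a b p).1 - (baker3 m a b q).1) := by
  cases γ with
  | inl i =>
    rw [baker3_of_mem_Omega3_inl ha hp, baker3_of_mem_Omega3_inl ha hq]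
    simp only [xScale, Sum.elim_inl]
    field_simp
    ring
  | inr j =>
    rw [baker3_of_mem_Omega3_inr hp, baker3_of_mem_Omega3_inr hq]
    have : 1 - m * a ≠ 0 := by linarith
    simp only [xScale, Sum.elim_inr]
    field_simp
    ring

lemma baker3_snd_fst_sub (ha : 0 < a) (hp : p ∈ Omega3 m a γ) (hq : q ∈ Omega3 m a γ) :
    (baker3 m a b p).2.1 - (baker3 m a b q).2.1 = (m : ℝ) ^ (-lsign γ) * (p.2.1 - q.2.1) := by
  cases γ with
  | inl i =>
    rw [baker3_of_mem_Omega3_inl ha hp, baker3_of_mem_Omega3_inl ha hq]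
    simp only [lsign, Sum.elim_inl, zpow_neg, zpow_one]
    ring
  | inr j =>
    rw [baker3_of_mem_Omega3_inr hp, baker3_of_mem_Omega3_inr hq]
    simp only [lsign, Sum.elim_inr, zpow_neg, zpow_one, inv_inv]
    ring

lemma baker3_snd_snd_sub (ha : 0 < a) (hp : p ∈ Omega3 m a γ) (hq : q ∈ Omega3 m a γ) :
    (baker3 m a b p).2.2 - (baker3 m a b q).2.2 = zScale m b γ * (p.2.2 - q.2.2) := by
  cases γ with
  | inl i =>
    rw [baker3_of_mem_Omega3_inl ha hp, baker3_of_mem_Omega3_inl ha hq]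
    simp only [zScale, Sum.elim_inl]
    ring
  | inr j =>
    rw [baker3_of_mem_Omega3_inr hp, baker3_of_mem_Omega3_inr hq]
    simp only [zScale, Sum.elim_inr]
    ring

end Domains

section Orbits

variable {m : ℕ} {a b : ℝ} {ω : ℤ → Letter m} {o o' : ℤ → ℝ × ℝ × ℝ}

lemma dist_fst_le_pow_mul (ha : 0 < a) (hma : m * a < 1)
    (ho : ∀ k, o (k + 1) = baker3 m a b (o k)) (ho' : ∀ k, o' (k + 1) = baker3 m a b (o' k))
    (j : ℤ) (n : ℕ)
    (hw : ∀ k < n, o (j + k) ∈ Omega3 m a (ω (j + k)) ∧ o' (j + k) ∈ Omega3 m a (ω (j + k))) :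
    dist (o j).1 (o' j).1 ≤ max a (1 - m * a) ^ n * dist (o (j + n)).1 (o' (j + n)).1 := by
  induction n with
  | zero => simp
  | succ n ih =>
    have hr : 0 ≤ max a (1 - m * a) := le_max_of_le_left ha.le
    obtain ⟨hp, hq⟩ := hw n n.lt_succ_self
    have hstep : dist (o (j + n)).1 (o' (j + n)).1
        ≤ max a (1 - m * a) * dist (o (j + (n + 1 : ℕ))).1 (o' (j + (n + 1 : ℕ))).1 := by
      rw [Real.dist_eq, Real.dist_eq, sub_fst_eq_xScale_mul ha hma hp hq, abs_mul,
        abs_of_pos (xScale_pos ha hma), Nat.cast_succ, ← add_assoc, ho, ho']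
      exact mul_le_mul_of_nonneg_right xScale_le_max (abs_nonneg _)
    calc dist (o j).1 (o' j).1
        ≤ max a (1 - m * a) ^ n * dist (o (j + n)).1 (o' (j + n)).1 :=
          ih fun k hk => hw k (by omega)
      _ ≤ max a (1 - m * a) ^ n * (max a (1 - m * a) *
            dist (o (j + (n + 1 : ℕ))).1 (o' (j + (n + 1 : ℕ))).1) := by gcongr
      _ = _ := by ring

lemma dist_snd_snd_le_pow_mul (ha : 0 < a) (hb : 0 < b) (hmb : m * b < 1)
    (ho : ∀ k, o (k + 1) = baker3 m a b (o k)) (ho' : ∀ k, o' (k + 1) = baker3 m a b (o' k))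
    (j : ℤ) (n : ℕ)
    (hw : ∀ k < n, o (j + k) ∈ Omega3 m a (ω (j + k)) ∧ o' (j + k) ∈ Omega3 m a (ω (j + k))) :
    dist (o (j + n)).2.2 (o' (j + n)).2.2 ≤ max b (1 - m * b) ^ n * dist (o j).2.2 (o' j).2.2 := by
  induction n with
  | zero => simp
  | succ n ih =>
    have hs : 0 ≤ max b (1 - m * b) := le_max_of_le_left hb.le
    obtain ⟨hp, hq⟩ := hw n n.lt_succ_self
    have hstep : dist (o (j + (n + 1 : ℕ))).2.2 (o' (j + (n + 1 : ℕ))).2.2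
        ≤ max b (1 - m * b) * dist (o (j + n)).2.2 (o' (j + n)).2.2 := by
      rw [Real.dist_eq, Real.dist_eq, Nat.cast_succ, ← add_assoc, ho, ho',
        baker3_snd_snd_sub ha hp hq, abs_mul, abs_of_pos (zScale_pos hb hmb)]
      exact mul_le_mul_of_nonneg_right zScale_le_max (abs_nonneg _)
    calc dist (o (j + (n + 1 : ℕ))).2.2 (o' (j + (n + 1 : ℕ))).2.2
        ≤ max b (1 - m * b) * dist (o (j + n)).2.2 (o' (j + n)).2.2 := hstep
      _ ≤ max b (1 - m * b) * (max b (1 - m * b) ^ n * dist (o j).2.2 (o' j).2.2) := by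
          gcongr
          exact ih fun k hk => hw k (by omega)
      _ = _ := by ring

lemma snd_fst_sub_eq_zpow_mul (ha : 0 < a)
    (ho : ∀ k, o (k + 1) = baker3 m a b (o k)) (ho' : ∀ k, o' (k + 1) = baker3 m a b (o' k))
    (j : ℤ) (n : ℕ)
    (hw : ∀ k < n, o (j + k) ∈ Omega3 m a (ω (j + k)) ∧ o' (j + k) ∈ Omega3 m a (ω (j + k))) :
    (o (j + n)).2.1 - (o' (j + n)).2.1 =
      (m : ℝ) ^ (-∑ k ∈ Finset.range n, lsign (ω (j + k))) * ((o j).2.1 - (o' j).2.1) := by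
  induction n with
  | zero => simp
  | succ n ih =>
    obtain ⟨hp, hq⟩ := hw n n.lt_succ_self
    have hm : (m : ℝ) ≠ 0 := by exact_mod_cast (ω (j + n)).pos.ne'
    rw [Nat.cast_succ, ← add_assoc, ho, ho', baker3_snd_fst_sub ha hp hq,
      ih fun k hk => hw k (by omega), Finset.sum_range_succ, neg_add, zpow_add₀ hm]
    ring

lemma snd_fst_sub_eq_zpow_Hfun_mul (ha : 0 < a)
    (ho : ∀ k, o (k + 1) = baker3 m a b (o k)) (ho' : ∀ k, o' (k + 1) = baker3 m a b (o' k))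
    (i : ℤ) (hw : ∀ k, |k| ≤ |i| → o k ∈ Omega3 m a (ω k) ∧ o' k ∈ Omega3 m a (ω k)) :
    (o 0).2.1 - (o' 0).2.1 = (m : ℝ) ^ Hfun ω i * ((o i).2.1 - (o' i).2.1) := by
  rcases le_or_gt 0 i with hi | hi
  · have hm : (m : ℝ) ≠ 0 := by exact_mod_cast (ω 0).pos.ne'
    have key := snd_fst_sub_eq_zpow_mul ha ho ho' 0 i.toNat
      fun k hk => hw _ (by rw [abs_le, abs_of_nonneg hi]; omega)
    simp only [zero_add, Int.toNat_of_nonneg hi] at key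
    rw [key, ← mul_assoc, ← zpow_add₀ hm, Hfun, if_pos hi, add_neg_cancel, zpow_zero, one_mul]
  · have key := snd_fst_sub_eq_zpow_mul ha ho ho' i (-i).toNat
      fun k hk => hw _ (by rw [abs_le, abs_of_neg hi]; omega)
    rw [Hfun, if_neg hi.not_ge]
    rwa [Int.toNat_of_nonneg (by omega), add_neg_cancel] at key

end Orbits

lemma max_lt_one_of_mul_lt_one {m : ℕ} {a : ℝ} (hm : 1 ≤ m) (ha : 0 < a) (hma : m * a < 1) :
    max a (1 - m * a) < 1 := by
  have hm' : (1 : ℝ) ≤ m := by exact_mod_cast hm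
  exact max_lt (by nlinarith) (by nlinarith)

section Coding

variable {m : ℕ} {a b : ℝ} {ω ω' : ℤ → Letter m} {p q : ℝ × ℝ × ℝ}

lemma dist_coords_le_of_eqOn_window (ha : 0 < a) (hma : m * a < 1) (hb : 0 < b)
    (hmb : m * b < 1) (hp : Codes3 m a b p ω) (hq : Codes3 m a b q ω') (N : ℕ)
    (hag : ∀ n : ℤ, |n| ≤ N → ω' n = ω n) :
    dist p.1 q.1 ≤ max a (1 - m * a) ^ N ∧
      (∀ i : ℤ, |i| ≤ N → dist p.2.1 q.2.1 ≤ (m : ℝ) ^ Hfun ω i) ∧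
      dist p.2.2 q.2.2 ≤ max b (1 - m * b) ^ N := by
  obtain ⟨o, rfl, ho, hoΩ⟩ := hp
  obtain ⟨o', rfl, ho', hoΩ'⟩ := hq
  have hw : ∀ k : ℤ, |k| ≤ N → o k ∈ Omega3 m a (ω k) ∧ o' k ∈ Omega3 m a (ω k) :=
    fun k hk => ⟨interior_subset (hoΩ k), hag k hk ▸ interior_subset (hoΩ' k)⟩
  have hcube k := mem_unitCube_of_mem_Omega3 ha.le hma.le (interior_subset (hoΩ k))
  have hcube' k := mem_unitCube_of_mem_Omega3 ha.le hma.le (interior_subset (hoΩ' k))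
  refine ⟨?_, fun i hi => ?_, ?_⟩
  · calc dist (o 0).1 (o' 0).1
        ≤ max a (1 - m * a) ^ N * dist (o (0 + N)).1 (o' (0 + N)).1 :=
          dist_fst_le_pow_mul ha hma ho ho' 0 N fun k hk => hw _ (by rw [abs_le]; omega)
      _ ≤ max a (1 - m * a) ^ N * 1 := by
          have : 0 ≤ max a (1 - m * a) := le_max_of_le_left ha.le
          gcongr
          exact Real.dist_le_of_mem_Icc_01 (hcube _).1 (hcube' _).1
      _ = _ := mul_one _
  · have hm : (0 : ℝ) < m := by exact_mod_cast (ω 0).pos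
    rw [Real.dist_eq, snd_fst_sub_eq_zpow_Hfun_mul ha ho ho' i fun k hk => hw k (hk.trans hi),
      abs_mul, abs_of_pos (zpow_pos hm _), ← Real.dist_eq]
    exact mul_le_of_le_one_right (zpow_pos hm _).le
      (Real.dist_le_of_mem_Icc_01 (hcube _).2.1 (hcube' _).2.1)
  · calc dist (o 0).2.2 (o' 0).2.2
        = dist (o (-N + N)).2.2 (o' (-N + N)).2.2 := by rw [neg_add_cancel]
      _ ≤ max b (1 - m * b) ^ N * dist (o (-N)).2.2 (o' (-N)).2.2 :=
          dist_snd_snd_le_pow_mul ha hb hmb ho ho' (-N) N fun k hk => hw _ (by rw [abs_le]; omega)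
      _ ≤ max b (1 - m * b) ^ N * 1 := by
          have : 0 ≤ max b (1 - m * b) := le_max_of_le_left hb.le
          gcongr
          exact Real.dist_le_of_mem_Icc_01 (hcube _).2.2 (hcube' _).2.2
      _ = _ := mul_one _

lemma exists_window_dist_lt (hm : 1 < m) (ha : 0 < a) (hma : m * a < 1) (hb : 0 < b)
    (hmb : m * b < 1) (hA : inA ω) (hp : Codes3 m a b p ω) {ε : ℝ} (hε : 0 < ε) :
    ∃ N : ℕ, ∀ ω' q, Codes3 m a b q ω' → (∀ n : ℤ, |n| ≤ N → ω' n = ω n) → dist q p < ε := by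
  have hm' : (1 : ℝ) < m := by exact_mod_cast hm
  obtain ⟨C, hC⟩ := exists_pow_lt_of_lt_one hε (inv_lt_one_of_one_lt₀ hm')
  obtain ⟨i, hi⟩ : ∃ i, Hfun ω i < -C := hA.elim (fun h => (h _).exists) (fun h => (h _).exists)
  have hr := tendsto_pow_atTop_nhds_zero_of_lt_one (le_max_of_le_left ha.le)
    (max_lt_one_of_mul_lt_one hm.le ha hma)
  have hs := tendsto_pow_atTop_nhds_zero_of_lt_one (le_max_of_le_left hb.le)
    (max_lt_one_of_mul_lt_one hm.le hb hmb)
  obtain ⟨N, hNi, hNr, hNs⟩ := ((eventually_ge_atTop i.natAbs).and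
    ((hr.eventually (gt_mem_nhds hε)).and (hs.eventually (gt_mem_nhds hε)))).exists
  refine ⟨N, fun ω' q hq hag => ?_⟩
  obtain ⟨hx, hy, hz⟩ := dist_coords_le_of_eqOn_window ha hma hb hmb hp hq N hag
  have hy' : dist p.2.1 q.2.1 < ε := calc
    dist p.2.1 q.2.1 ≤ (m : ℝ) ^ Hfun ω i := hy i (by rw [Int.abs_eq_natAbs]; omega)
    _ ≤ (m : ℝ) ^ (-C : ℤ) := zpow_le_zpow_right₀ hm'.le hi.le
    _ = (m : ℝ)⁻¹ ^ C := by rw [zpow_neg, zpow_natCast, inv_pow]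
    _ < ε := hC
  rw [dist_comm, Prod.dist_eq, Prod.dist_eq]
  exact max_lt (hx.trans_lt hNr) (max_lt hy' (hz.trans_lt hNs))

end Coding

/-- The second clause is the continuity of the inverse of `π̄` restricted to `π̄⁻¹(A)`. -/
theorem coding_injective_on_A (m : ℕ) (hm : 2 ≤ m) (a b : ℝ)
    (ha0 : 0 < a) (ha1 : a < 1 / m) (hb0 : 0 < b) (hb1 : b < 1 / m) :
    (∀ ω : ℤ → Letter m, DyckSeq ω → inA ω →
      ∀ p q : ℝ × ℝ × ℝ, Codes3 m a b p ω → Codes3 m a b q ω → p = q) ∧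
    (∀ (ω : ℤ → Letter m) (p : ℝ × ℝ × ℝ), DyckSeq ω → inA ω → Codes3 m a b p ω →
      ∀ ε : ℝ, 0 < ε → ∃ N : ℕ, ∀ (ω' : ℤ → Letter m) (q : ℝ × ℝ × ℝ),
        DyckSeq ω' → inA ω' → Codes3 m a b q ω' →
        (∀ n : ℤ, |n| ≤ (N : ℤ) → ω' n = ω n) → dist q p < ε) := by
  have hm0 : (0 : ℝ) < m := by exact_mod_cast (by omega : 0 < m)
  have hma : m * a < 1 := by rwa [lt_div_iff₀' hm0] at ha1
  have hmb : m * b < 1 := by rwa [lt_div_iff₀' hm0] at hb1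
  have hwindow {ω : ℤ → Letter m} {p : ℝ × ℝ × ℝ} (hA : inA ω) (hp : Codes3 m a b p ω)
      {ε : ℝ} (hε : 0 < ε) := exists_window_dist_lt (by omega) ha0 hma hb0 hmb hA hp hε
  refine ⟨fun ω _ hA p q hp hq => ?_, fun ω p _ hA hp ε hε => ?_⟩
  · refine (eq_of_forall_dist_le fun ε hε => ?_).symm
    obtain ⟨N, hN⟩ := hwindow hA hp hε
    exact (hN ω q hq fun _ _ => rfl).le
  · obtain ⟨N, hN⟩ := hwindow hA hp hε
    exact ⟨N, fun ω' q _ _ hq hag => hN ω' q hq hag⟩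
end

section
/- For the Bernoulli measure λ_α on {α₁,...,α_m, β}^ℤ assigning equal mass 1/(m+1) to each symbol, the set φ_α(B_α) of sequences in which every occurrence of β is matched (i.e. for every i with ω_i = β there exists k ≥ 1 with Ĥ_{α,i+1−k}(ω) = Ĥ_{α,i+1}(ω)) has full measure: λ_α(φ_α(B_α)) = 1. -/
/-!
If the `β` at position `i` is unmatched, then reading backwards from `i` the signed count of
letters starts at `-1` and, moving by `±1` without ever returning to `0`, stays `≤ -1`. So every
window of length `2n` ending at `i` contains fewer than `n` letters `αᵢ`. There are at most
`4ⁿ mⁿ` such words, each of probability `(m + 1)^(-2n)`, hence an unmatched `β` at `i` has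
probability at most `(4m / (m + 1)²)ⁿ → 0`. This counting bound replaces the ergodic theorem.
-/

/-- The alphabet `{α₁,…,α_m, β}` of `Σ_α`, realized as `Fin (m+1)`:
the symbols `i < m` are the left brackets `α_{i+1}` and `Fin.last m` is `β`. -/
abbrev AlphaLetter (m : ℕ) := Fin (m + 1)

/-- Sign of a symbol of `Σ_α`: `+1` on each `αᵢ` and `-1` on `β`. -/
def asign (m : ℕ) (c : AlphaLetter m) : ℤ := if (c : ℕ) < m then 1 else -1

/-- The height function `Ĥ_{α,i}(ω)`: the signed count of `α`'s minus `β`'s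
between positions `0` and `i`, with the paper's convention for negative `i`. -/
def Hhat (m : ℕ) (ω : ℤ → AlphaLetter m) (i : ℤ) : ℤ :=
  if 0 ≤ i then ∑ k ∈ Finset.range i.toNat, asign m (ω k)
  else -∑ k ∈ Finset.range (-i).toNat, asign m (ω (i + k))

open MeasureTheory ENNReal

open Finset

lemma asign_eq_one_or_neg_one (m : ℕ) (c : AlphaLetter m) : asign m c = 1 ∨ asign m c = -1 := by
  unfold asign; split <;> simp

lemma asign_last (m : ℕ) : asign m (Fin.last m) = -1 := by
  simp [asign]

lemma sum_asign_eq {ι : Type*} (m : ℕ) (s : Finset ι) (w : ι → AlphaLetter m) :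
    ∑ j ∈ s, asign m (w j) = 2 * #{j ∈ s | (w j : ℕ) < m} - #s := by
  classical
  have hcard := card_filter_add_card_filter_not (s := s) (fun j => (w j : ℕ) < m)
  simp only [asign, sum_ite, sum_const, nsmul_eq_mul, mul_one, mul_neg]
  omega

lemma Hhat_add_one (m : ℕ) (ω : ℤ → AlphaLetter m) (a : ℤ) :
    Hhat m ω (a + 1) = Hhat m ω a + asign m (ω a) := by
  unfold Hhat
  rcases lt_trichotomy a (-1) with h | rfl | h
  · rw [if_neg (by omega), if_neg (by omega), show (-a).toNat = (-(a + 1)).toNat + 1 by omega,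
      sum_range_succ']
    have hshift : ∀ k : ℕ, a + (k + 1 : ℕ) = (a + 1) + k := fun k => by push_cast; ring
    simp only [hshift, Nat.cast_zero, add_zero]
    ring
  · norm_num
  · rw [if_pos (by omega), if_pos (by omega), show (a + 1).toNat = a.toNat + 1 by omega,
      sum_range_succ, Int.toNat_of_nonneg (by omega)]

lemma Hhat_sub_Hhat_eq_sum (m : ℕ) (ω : ℤ → AlphaLetter m) (i : ℤ) (k : ℕ) :
    Hhat m ω (i + 1) - Hhat m ω (i + 1 - k) = ∑ j ∈ range k, asign m (ω (i - j)) := by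
  induction k with
  | zero => simp
  | succ k ih =>
    rw [sum_range_succ, ← ih, show i + 1 - (k : ℤ) = (i - k) + 1 by ring,
      Hhat_add_one m ω (i - k), show i + 1 - ((k + 1 : ℕ) : ℤ) = i - k by push_cast; ring]
    ring

lemma sum_range_le_neg_one_of_ne_zero (f : ℕ → ℤ) (hf : ∀ j, f j = 1 ∨ f j = -1)
    (h0 : f 0 = -1) (hne : ∀ k, 1 ≤ k → ∑ j ∈ range k, f j ≠ 0) :
    ∀ k, 1 ≤ k → ∑ j ∈ range k, f j ≤ -1 := by
  intro k hk
  induction k, hk using Nat.le_induction with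
  | base => simp [h0]
  | succ k hk ih =>
    have hk' := hne (k + 1) (by omega)
    rw [sum_range_succ] at hk' ⊢
    rcases hf k with h | h <;> omega

def unmatchedAt (m : ℕ) (i : ℤ) : Set (ℤ → AlphaLetter m) :=
  {ω | ω i = Fin.last m ∧ ∀ k : ℕ, 1 ≤ k → Hhat m ω (i + 1 - k) ≠ Hhat m ω (i + 1)}

lemma sum_asign_le_neg_one_of_mem_unmatchedAt {m : ℕ} {i : ℤ} {ω : ℤ → AlphaLetter m}
    (hω : ω ∈ unmatchedAt m i) {k : ℕ} (hk : 1 ≤ k) :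
    ∑ j ∈ range k, asign m (ω (i - j)) ≤ -1 := by
  refine sum_range_le_neg_one_of_ne_zero _ (fun j => asign_eq_one_or_neg_one m _)
    (by simp [hω.1, asign_last]) (fun k hk hzero => hω.2 k hk ?_) k hk
  linarith [Hhat_sub_Hhat_eq_sum m ω i k]

def backwardWindow (i : ℤ) (k : ℕ) : Fin k ↪ ℤ :=
  ⟨fun j => i - (j : ℕ), fun a b h => Fin.ext (by simpa using h)⟩

lemma unmatchedAt_subset (m : ℕ) (i : ℤ) {n : ℕ} (hn : 1 ≤ n) :
    unmatchedAt m i ⊆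
      {ω | ω ∘ backwardWindow i (2 * n) ∈
        ({w | #{j | (w j : ℕ) < m} < n} : Finset (Fin (2 * n) → AlphaLetter m))} := by
  intro ω hω
  have hsum := sum_asign_le_neg_one_of_mem_unmatchedAt hω (k := 2 * n) (by omega)
  rw [← Fin.sum_univ_eq_sum_range (fun j => asign m (ω (i - j))), sum_asign_eq,
    card_univ, Fintype.card_fin] at hsum
  simp only [Set.mem_ofPred_eq, mem_filter, mem_univ, true_and]
  show #{j : Fin (2 * n) | (ω (i - ((j : ℕ) : ℤ)) : ℕ) < m} < n
  push_cast at hsum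
  omega

lemma card_words_few_alpha_le {ι : Type*} [Fintype ι] [DecidableEq ι] {m : ℕ} (hm : 1 ≤ m)
    (n : ℕ) :
    #({w | #{j | (w j : ℕ) < m} < n} : Finset (ι → AlphaLetter m)) ≤
      2 ^ Fintype.card ι * m ^ n := by
  -- a word is determined by the set `S` of positions of its letters `αᵢ` and by its letters there
  let words (S : Finset ι) : Finset (ι → AlphaLetter m) :=
    Fintype.piFinset fun j =>
      if j ∈ S then ({a | (a : ℕ) < m} : Finset (AlphaLetter m)) else {Fin.last m}
  have hsub : ({w | #{j | (w j : ℕ) < m} < n} : Finset (ι → AlphaLetter m)) ⊆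
      ({S | #S < n} : Finset (Finset ι)).biUnion words := by
    intro w hw
    refine mem_biUnion.2 ⟨({j | (w j : ℕ) < m} : Finset ι), by simpa using hw,
      Fintype.mem_piFinset.2 fun j => ?_⟩
    by_cases h : (w j : ℕ) < m
    · simp [h]
    · have := (w j).isLt
      simp [h, Fin.ext_iff]
      omega
  have hcard (S : Finset ι) : #(words S) = m ^ #S := by
    simp [words, Fintype.card_piFinset, apply_ite card, Fin.card_filter_val_lt, prod_ite_mem]
  calc _ ≤ #(({S | #S < n} : Finset (Finset ι)).biUnion words) := card_le_card hsub
    _ ≤ ∑ S ∈ ({S | #S < n} : Finset (Finset ι)), m ^ #S := by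
      simpa only [hcard] using card_biUnion_le (t := words)
    _ ≤ ∑ S ∈ ({S | #S < n} : Finset (Finset ι)), m ^ n :=
      sum_le_sum fun S hS => Nat.pow_le_pow_right hm (mem_filter.1 hS).2.le
    _ ≤ 2 ^ Fintype.card ι * m ^ n := by
      rw [sum_const, smul_eq_mul, ← Fintype.card_finset]
      exact Nat.mul_le_mul_right _ (card_filter_le _ _)

lemma measure_comp_embedding_mem_le {m : ℕ} {lam : Measure (ℤ → AlphaLetter m)}
    (hcyl : ∀ (F : Finset ℤ) (g : ℤ → AlphaLetter m),
      lam {ω | ∀ i ∈ F, ω i = g i} = (((m : ℝ≥0∞) + 1)⁻¹) ^ F.card)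
    {ι : Type*} [Fintype ι] (e : ι ↪ ℤ) (W : Finset (ι → AlphaLetter m)) :
    lam {ω | ω ∘ e ∈ W} ≤ #W * (((m : ℝ≥0∞) + 1)⁻¹) ^ Fintype.card ι := by
  have hcylinder (w : ι → AlphaLetter m) :
      lam {ω | ω ∘ e = w} = (((m : ℝ≥0∞) + 1)⁻¹) ^ Fintype.card ι := by
    have h := hcyl (univ.map e) (Function.extend e w fun _ => 0)
    rw [card_map, card_univ] at h
    convert h using 3 with ω
    simp [funext_iff, e.injective.extend_apply]
  calc lam {ω | ω ∘ e ∈ W} = lam (⋃ w ∈ W, {ω | ω ∘ e = w}) := by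
        congr 1; ext ω; simp
    _ ≤ ∑ w ∈ W, lam {ω | ω ∘ e = w} := measure_biUnion_finset_le _ _
    _ = #W * (((m : ℝ≥0∞) + 1)⁻¹) ^ Fintype.card ι := by
        simp only [hcylinder, sum_const, nsmul_eq_mul]

lemma measure_unmatchedAt_le {m : ℕ} (hm : 1 ≤ m) {lam : Measure (ℤ → AlphaLetter m)}
    (hcyl : ∀ (F : Finset ℤ) (g : ℤ → AlphaLetter m),
      lam {ω | ∀ i ∈ F, ω i = g i} = (((m : ℝ≥0∞) + 1)⁻¹) ^ F.card)
    (i : ℤ) {n : ℕ} (hn : 1 ≤ n) :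
    lam (unmatchedAt m i) ≤ (4 * m * (((m : ℝ≥0∞) + 1)⁻¹) ^ 2) ^ n := by
  calc lam (unmatchedAt m i)
      ≤ #({w | #{j | (w j : ℕ) < m} < n} : Finset (Fin (2 * n) → AlphaLetter m)) *
          (((m : ℝ≥0∞) + 1)⁻¹) ^ (2 * n) := by
        simpa using (measure_mono (unmatchedAt_subset m i hn)).trans
          (measure_comp_embedding_mem_le hcyl _ _)
    _ ≤ ((2 ^ (2 * n) * m ^ n : ℕ) : ℝ≥0∞) * (((m : ℝ≥0∞) + 1)⁻¹) ^ (2 * n) := by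
        gcongr
        simpa using card_words_few_alpha_le (ι := Fin (2 * n)) hm n
    _ = (4 * m * (((m : ℝ≥0∞) + 1)⁻¹) ^ 2) ^ n := by
        push_cast
        rw [mul_pow, mul_pow, ← pow_mul, pow_mul (2 : ℝ≥0∞)]
        norm_num

-- `4m < (m + 1)²` is `(m - 1)² > 0`: this is where `m ≥ 2` enters.
lemma four_mul_mul_inv_add_one_sq_lt_one {m : ℕ} (hm : 2 ≤ m) :
    4 * m * (((m : ℝ≥0∞) + 1)⁻¹) ^ 2 < 1 := by
  rw [← ENNReal.inv_pow, ← div_eq_mul_inv, ENNReal.div_lt_iff (by simp) (by simp), one_mul]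
  exact_mod_cast (by nlinarith : 4 * m < (m + 1) ^ 2)

lemma measure_unmatchedAt_eq_zero {m : ℕ} (hm : 2 ≤ m) {lam : Measure (ℤ → AlphaLetter m)}
    (hcyl : ∀ (F : Finset ℤ) (g : ℤ → AlphaLetter m),
      lam {ω | ∀ i ∈ F, ω i = g i} = (((m : ℝ≥0∞) + 1)⁻¹) ^ F.card)
    (i : ℤ) : lam (unmatchedAt m i) = 0 :=
  le_zero_iff.1 <| ge_of_tendsto
    (ENNReal.tendsto_pow_atTop_nhds_zero_of_lt_one (four_mul_mul_inv_add_one_sq_lt_one hm))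
    (Filter.eventually_atTop.2 ⟨1, fun _ hn => measure_unmatchedAt_le (by omega) hcyl i hn⟩)

/-- For the uniform Bernoulli measure `λ_α` on
`{α₁,…,α_m,β}^ℤ` (characterized by giving each cylinder on a finite set `F` of
coordinates measure `(1/(m+1))^{|F|}`), the set of sequences in which every
occurrence of `β` is matched has full measure. -/
theorem bernoulli_matched_full_measure (m : ℕ) (hm : 2 ≤ m)
    (lam : Measure (ℤ → AlphaLetter m)) [IsProbabilityMeasure lam]
    (hcyl : ∀ (F : Finset ℤ) (g : ℤ → AlphaLetter m),
      lam {ω | ∀ i ∈ F, ω i = g i} = (((m : ℝ≥0∞) + 1)⁻¹) ^ F.card) :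
    lam {ω | ∀ i : ℤ, ω i = Fin.last m →
      ∃ k : ℕ, 1 ≤ k ∧ Hhat m ω (i + 1 - k) = Hhat m ω (i + 1)} = 1 := by
  rw [← measure_univ (μ := lam)]
  refine measure_congr (ae_eq_univ.2 (measure_mono_null ?_
    (measure_iUnion_null (measure_unmatchedAt_eq_zero hm hcyl))))
  intro ω hω
  simp only [Set.mem_compl_iff, Set.mem_ofPred_eq, not_forall, not_exists, not_and] at hω
  obtain ⟨i, hβ, hunmatched⟩ := hω
  exact Set.mem_iUnion.2 ⟨i, hβ, hunmatched⟩
end
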